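/- arXiv:2106.00049 — 6 statements merged into one kernel-verified Lean document; each statement's English description precedes it below -/
import Mathlib

section
/- Let (X,d) be an unbounded metric space, p ∈ X, and r̃ a scaling sequence. If F ⊆ Seq(X,r̃) is self-stable, then F ∪ X̃⁰_{∞,r̃} is also a self-stable subset of Seq(X,r̃); consequently, X̃⁰_{∞,r̃} is contained in every maximal self-stable subset of Seq(X,r̃). -/
open Filter Topology

/-- Two sequences of points of `X` are mutually stable with respect to the scaling
sequence `r` if the finite limit `lim dist (x n) (y n) / r n` exists. -/
def MutStable {X : Type*} [MetricSpace X] (r : ℕ → ℝ) (x y : ℕ → X) : Prop :=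
  ∃ l : ℝ, Tendsto (fun n => dist (x n) (y n) / r n) atTop (𝓝 l)

/-- `Seq(X, r̃)`: the set of sequences `x` of points of `X` such that the finite limit
`d̃_r̃(x) = lim dist (x n) p / r n` exists. -/
def SeqSet {X : Type*} [MetricSpace X] (p : X) (r : ℕ → ℝ) : Set (ℕ → X) :=
  {x | ∃ l : ℝ, Tendsto (fun n => dist (x n) p / r n) atTop (𝓝 l)}

/-- `X̃⁰_{∞,r̃}`: the set of sequences `z` of points of `X` with
`lim dist (z n) p / r n = 0`. -/
def NullSeq {X : Type*} [MetricSpace X] (p : X) (r : ℕ → ℝ) : Set (ℕ → X) :=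
  {z | Tendsto (fun n => dist (z n) p / r n) atTop (𝓝 0)}

/-- A set `F ⊆ Seq(X, r̃)` is self-stable if any two of its elements are mutually
stable. -/
def SelfStable {X : Type*} [MetricSpace X] (p : X) (r : ℕ → ℝ) (F : Set (ℕ → X)) : Prop :=
  F ⊆ SeqSet p r ∧ ∀ x ∈ F, ∀ y ∈ F, MutStable r x y

/-- A maximal self-stable subset of `Seq(X, r̃)`. -/
def MaxSelfStable {X : Type*} [MetricSpace X] (p : X) (r : ℕ → ℝ) (F : Set (ℕ → X)) : Prop :=
  SelfStable p r F ∧ ∀ G, SelfStable p r G → F ⊆ G → F = G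


private lemma key_tendsto {X : Type*} [MetricSpace X] (p : X) (r : ℕ → ℝ)
    (hr₁ : ∀ n, 0 < r n) (x z : ℕ → X) (l : ℝ)
    (hx : Tendsto (fun n => dist (x n) p / r n) atTop (𝓝 l))
    (hz : Tendsto (fun n => dist (z n) p / r n) atTop (𝓝 0)) :
    Tendsto (fun n => dist (x n) (z n) / r n) atTop (𝓝 l) := by
  have h0 : Tendsto (fun n => dist (x n) (z n) / r n - dist (x n) p / r n) atTop (𝓝 0) := by
    refine squeeze_zero_norm (fun n => ?_) hz
    rw [div_sub_div_same, Real.norm_eq_abs, abs_div, abs_of_pos (hr₁ n)]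
    apply div_le_div_of_nonneg_right _ (hr₁ n).le
    calc |dist (x n) (z n) - dist (x n) p| = |dist (z n) (x n) - dist p (x n)| := by
          rw [dist_comm (x n) (z n), dist_comm (x n) p]
      _ ≤ dist (z n) p := abs_dist_sub_le _ _ _
  have := h0.add hx
  simpa using this

private lemma selfStable_union {X : Type*} [MetricSpace X] (p : X) (r : ℕ → ℝ)
    (hr₁ : ∀ n, 0 < r n)
    (F : Set (ℕ → X)) (hF : SelfStable p r F) :
    SelfStable p r (F ∪ NullSeq p r) := by
  obtain ⟨hsub, hmut⟩ := hF
  constructor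
  · rintro x (hx | hx)
    · exact hsub hx
    · exact ⟨0, hx⟩
  · rintro x (hx | hx) y (hy | hy)
    · exact hmut x hx y hy
    · obtain ⟨l, hl⟩ := hsub hx
      exact ⟨l, key_tendsto p r hr₁ x y l hl hy⟩
    · obtain ⟨l, hl⟩ := hsub hy
      refine ⟨l, ?_⟩
      have := key_tendsto p r hr₁ y x l hl hx
      simpa [dist_comm] using this
    · exact ⟨0, key_tendsto p r hr₁ x y 0 hx hy⟩

theorem selfStable_union_nullSeq {X : Type*} [MetricSpace X] (p : X)
    (hX : ∀ C : ℝ, ∃ x : X, C < dist x p)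
    (r : ℕ → ℝ) (hr₁ : ∀ n, 0 < r n) (hr₂ : Tendsto r atTop atTop)
    (F : Set (ℕ → X)) (hF : SelfStable p r F) :
    SelfStable p r (F ∪ NullSeq p r) ∧
      ∀ M : Set (ℕ → X), MaxSelfStable p r M → NullSeq p r ⊆ M := by
  refine ⟨selfStable_union p r hr₁ F hF, ?_⟩
  intro M hM z hz
  have h := selfStable_union p r hr₁ M hM.1
  have := hM.2 _ h Set.subset_union_left
  rw [this]
  exact Or.inr hz
end

section
/- Let (X,d) be an unbounded metric space and let p ∈ X. Then the set Sp(X) = {d(x,p) : x ∈ X} is nonporous at infinity (p⁺(Sp(X),∞) = 0) if and only if for every scaling sequence r̃ = (r_n), every strictly increasing sequence (n_k) of natural numbers (giving the subsequence r̃' = (r_{n_k})), and every x̃ = (x_k) ∈ Seq(X,r̃'), there exists ỹ = (y_n) ∈ Seq(X,r̃) with y_{n_k} = x_k for every k. -/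
open Filter Topology

/-- `l(∞, h, E)`: the length of the longest open interval contained in `[0, h] \ E`. -/
noncomputable def gapLen (E : Set ℝ) (h : ℝ) : ℝ :=
  sSup {L : ℝ | ∃ a b : ℝ, 0 ≤ a ∧ a ≤ b ∧ b ≤ h ∧ Set.Ioo a b ∩ E = ∅ ∧ L = b - a}

/-- The porosity of `E ⊆ [0, ∞)` at infinity: `p⁺(E, ∞) = limsup_{h → ∞} l(∞, h, E) / h`. -/
noncomputable def porosityAtInfty (E : Set ℝ) : ℝ :=
  Filter.limsup (fun h => gapLen E h / h) Filter.atTop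

/-!
If `E = {d(x, p) : x ∈ X}` is nonporous at infinity, then for large `t` it meets every window
`((1 - ε) t, (1 + ε) t)`, so every `l ≥ 0` is the limit of `d(y_n, p) / r_n` for some sequence `y`;
a sequence given along `n_k` with limit `l` is completed off the `n_k` by such a `y`.
Conversely, porosity yields `ε > 0` and centres `c_k → ∞` with `|s - c_k| ≥ ε c_k` for all
`s ∈ E`. Interleave the scales `d(z_k, p)` (for points `z_k` escaping to infinity) and `c_k`, and
lift `z` along the even indices: the lift has ratio `1` at the even indices, hence tends to `1`,
which the gaps forbid at the odd indices.
-/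

open Set Function

theorem Function.Injective.tendsto_extend {α β γ δ : Type*} {f : α → β} (hf : Injective f)
    {g : β → γ → δ} {u : α → γ} {v : β → γ} {F : Filter δ}
    (hu : Tendsto (fun a => g (f a) (u a)) cofinite F)
    (hv : Tendsto (fun b => g b (v b)) cofinite F) :
    Tendsto (fun b => g b (extend f u v b)) cofinite F := by
  intro s hs
  have hfin : ((fun b => g b (extend f u v b)) ⁻¹' s)ᶜ ⊆
      f '' ((fun a => g (f a) (u a)) ⁻¹' s)ᶜ ∪ ((fun b => g b (v b)) ⁻¹' s)ᶜ := by
    intro b hb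
    by_cases h : ∃ a, f a = b
    · obtain ⟨a, rfl⟩ := h
      exact Or.inl ⟨a, by simpa [hf.extend_apply] using hb, rfl⟩
    · exact Or.inr (by simpa [extend_apply' _ _ _ h] using hb)
  exact (((hu hs).image f).union (hv hs)).subset hfin

theorem exists_tendsto_of_forall_eventually_exists_dist_lt {α β : Type*} [Nonempty α]
    [PseudoMetricSpace β] {u : ℕ → α → β} {l : β}
    (h : ∀ ε > 0, ∀ᶠ n in atTop, ∃ a, dist (u n a) l < ε) :
    ∃ y : ℕ → α, Tendsto (fun n => u n (y n)) atTop (𝓝 l) := by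
  set d := fun n => Metric.infDist l (range (u n))
  have hd : Tendsto d atTop (𝓝 0) := tendsto_order.2
    ⟨fun c hc => Eventually.of_forall fun n => hc.trans_le Metric.infDist_nonneg,
      fun ε hε => (h ε hε).mono fun n ⟨a, ha⟩ =>
        (Metric.infDist_le_dist_of_mem (mem_range_self a)).trans_lt (by rwa [dist_comm])⟩
  have hy : ∀ n : ℕ, ∃ a, dist l (u n a) < d n + 1 / (n + 1) := fun n => by
    simpa using (Metric.infDist_lt_iff (range_nonempty (u n))).1
      (lt_add_of_pos_right (d n) (Nat.one_div_pos_of_nat (n := n)))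
  choose y hy using hy
  refine ⟨y, tendsto_iff_dist_tendsto_zero.2 (squeeze_zero (fun _ => dist_nonneg) (fun n => ?_)
    (by simpa using hd.add tendsto_one_div_add_atTop_nhds_zero_nat))⟩
  simpa [dist_comm, one_div] using (hy n).le

theorem exists_interleave_of_tendsto_atTop {u v : ℕ → ℝ} (hu : ∀ k, 0 < u k) (hv : ∀ k, 0 < v k)
    (hut : Tendsto u atTop atTop) (hvt : Tendsto v atTop atTop) :
    ∃ r : ℕ → ℝ, (∀ n, 0 < r n) ∧ Tendsto r atTop atTop ∧
      (∀ k, r (2 * k) = u k) ∧ ∀ k, r (2 * k + 1) = v k := by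
  have hinj : Injective (2 * · : ℕ → ℕ) := mul_right_injective₀ two_ne_zero
  refine ⟨extend (2 * ·) u (fun n => v (n / 2)), fun n => ?_, ?_, hinj.extend_apply _ _,
    fun k => ?_⟩
  · by_cases h : ∃ k, 2 * k = n
    · obtain ⟨k, rfl⟩ := h
      exact hinj.extend_apply u _ k ▸ hu k
    · exact (extend_apply' _ _ _ h).symm ▸ hv _
  · rw [← Nat.cofinite_eq_atTop] at hut ⊢
    refine hinj.tendsto_extend (g := fun _ t => t) hut ?_
    rw [Nat.cofinite_eq_atTop]
    exact hvt.comp (Nat.tendsto_div_const_atTop two_ne_zero)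
  · rw [extend_apply' _ _ _ (by omega)]
    congr
    omega

theorem not_tendsto_div_of_mul_le_abs_sub {ι : Type*} {l : Filter ι} [l.NeBot] {s c : ι → ℝ}
    {ε : ℝ} (hε : 0 < ε) (hc : ∀ i, 0 < c i) (hfar : ∀ i, ε * c i ≤ |s i - c i|) :
    ¬ Tendsto (fun i => s i / c i) l (𝓝 1) := fun h => by
  obtain ⟨i, hi⟩ := (h.eventually (Metric.ball_mem_nhds 1 hε)).exists
  rw [Real.dist_eq, div_sub_one (hc i).ne', abs_div, abs_of_pos (hc i),
    div_lt_iff₀ (hc i)] at hi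
  linarith [hfar i]

section Porosity

variable {E : Set ℝ}

theorem le_gapLen {h a b : ℝ} (ha : 0 ≤ a) (hab : a ≤ b) (hbh : b ≤ h)
    (hE : Ioo a b ∩ E = ∅) : b - a ≤ gapLen E h :=
  le_csSup ⟨h, fun _ ⟨_, _, _, _, _, _, hL⟩ => by linarith⟩ ⟨a, b, ha, hab, hbh, hE, rfl⟩

theorem gapLen_nonneg {h : ℝ} (hh : 0 ≤ h) : 0 ≤ gapLen E h :=
  sub_self (0 : ℝ) ▸ le_gapLen le_rfl le_rfl hh (by simp)

theorem gapLen_le_of_forall {h c : ℝ} (hh : 0 ≤ h)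
    (H : ∀ a b, 0 ≤ a → a ≤ b → b ≤ h → Ioo a b ∩ E = ∅ → b - a ≤ c) : gapLen E h ≤ c :=
  csSup_le ⟨0, 0, 0, le_rfl, le_rfl, hh, by simp, by simp⟩
    fun _ ⟨a, b, ha, hab, hbh, hE, hL⟩ => hL ▸ H a b ha hab hbh hE

theorem porosityAtInfty_eq_zero_iff_tendsto :
    porosityAtInfty E = 0 ↔ Tendsto (fun h => gapLen E h / h) atTop (𝓝 0) := by
  have hnonneg : ∀ᶠ h in atTop, 0 ≤ gapLen E h / h := by
    filter_upwards [eventually_ge_atTop 0] with h hh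
    exact div_nonneg (gapLen_nonneg hh) hh
  have hle : ∀ᶠ h in atTop, gapLen E h / h ≤ 1 := by
    filter_upwards [eventually_gt_atTop 0] with h hh
    exact div_le_one_of_le₀ (gapLen_le_of_forall hh.le fun a b ha _ hbh _ => by linarith) hh.le
  have hbdd := isBoundedUnder_of_eventually_le hle
  exact ⟨fun h0 => tendsto_of_le_liminf_of_limsup_le
    (le_liminf_of_le hbdd.isCoboundedUnder_ge hnonneg) h0.le hbdd
    (isBoundedUnder_of_eventually_ge hnonneg), Tendsto.limsup_eq⟩

theorem eventually_exists_mem_abs_sub_lt_of_porosityAtInfty_eq_zero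
    (h0 : porosityAtInfty E = 0) {ε : ℝ} (hε : 0 < ε) :
    ∀ᶠ t in atTop, ∃ s ∈ E, |s - t| < ε * t := by
  set δ := min ε 1
  have hδ : 0 < δ := lt_min hε one_pos
  have hδε : δ ≤ ε := min_le_left ε 1
  have hδ1 : δ ≤ 1 := min_le_right ε 1
  have hgap := (porosityAtInfty_eq_zero_iff_tendsto.1 h0).eventually
    (gt_mem_nhds (div_pos hδ (by linarith : 0 < 1 + δ)))
  filter_upwards [(tendsto_id.const_mul_atTop (by linarith : 0 < 1 + δ)).eventually hgap,
    eventually_gt_atTop 0] with t ht htpos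
  -- the window `((1 - δ) t, (1 + δ) t)` is twice as long as any gap below `(1 + δ) t`
  have hlt : gapLen E ((1 + δ) * t) < (1 + δ) * t - (1 - δ) * t := by
    rw [id, div_lt_div_iff₀ (by positivity) (by linarith)] at ht
    nlinarith [mul_pos hδ htpos]
  obtain ⟨s, hs, hsE⟩ : (Ioo ((1 - δ) * t) ((1 + δ) * t) ∩ E).Nonempty :=
    nonempty_iff_ne_empty.2 fun hE =>
      (le_gapLen (by nlinarith) (by nlinarith) le_rfl hE).not_gt hlt
  refine ⟨s, hsE, ?_⟩
  rw [abs_sub_lt_iff]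
  constructor <;> nlinarith [hs.1, hs.2]

theorem porosityAtInfty_eq_zero_of_eventually_exists_mem_abs_sub_lt
    (H : ∀ ε > 0, ∀ᶠ t in atTop, ∃ s ∈ E, |s - t| < ε * t) : porosityAtInfty E = 0 := by
  refine porosityAtInfty_eq_zero_iff_tendsto.2 (tendsto_order.2 ⟨fun c hc => ?_, fun ε hε => ?_⟩)
  · filter_upwards [eventually_ge_atTop 0] with h hh
    exact hc.trans_le (div_nonneg (gapLen_nonneg hh) hh)
  obtain ⟨T, hT⟩ := eventually_atTop.1 (H (ε / 4) (by positivity))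
  filter_upwards [eventually_gt_atTop 0, eventually_ge_atTop (4 * T / ε)] with h hh hTh
  rw [div_lt_iff₀ hh]
  refine (gapLen_le_of_forall hh.le fun a b ha hab hbh hE => ?_).trans_lt
    (by nlinarith : ε / 2 * h < ε * h)
  by_contra! hlong
  -- the midpoint of a long gap is far out, so some point of `E` lies close to it, inside the gap
  have hT' : T ≤ (a + b) / 2 := by
    rw [div_le_iff₀ hε] at hTh
    nlinarith
  obtain ⟨s, hsE, hs⟩ := hT _ hT'
  rw [abs_sub_lt_iff] at hs
  exact (eq_empty_iff_forall_notMem.1 hE) s ⟨⟨by nlinarith, by nlinarith⟩, hsE⟩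

theorem porosityAtInfty_eq_zero_iff :
    porosityAtInfty E = 0 ↔ ∀ ε > 0, ∀ᶠ t in atTop, ∃ s ∈ E, |s - t| < ε * t :=
  ⟨fun h0 _ => eventually_exists_mem_abs_sub_lt_of_porosityAtInfty_eq_zero h0,
    porosityAtInfty_eq_zero_of_eventually_exists_mem_abs_sub_lt⟩

end Porosity

section Lifting

variable {X : Type*} [MetricSpace X] {p : X}

theorem exists_tendsto_dist_div_of_porosityAtInfty_eq_zero
    (h0 : porosityAtInfty {t : ℝ | ∃ x : X, dist x p = t} = 0) {r : ℕ → ℝ}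
    (hrt : Tendsto r atTop atTop) {l : ℝ} (hl : 0 ≤ l) :
    ∃ y : ℕ → X, Tendsto (fun n => dist (y n) p / r n) atTop (𝓝 l) := by
  have : Nonempty X := ⟨p⟩
  refine exists_tendsto_of_forall_eventually_exists_dist_lt
    (u := fun n x => dist x p / r n) fun ε hε => ?_
  rcases hl.eq_or_lt with rfl | hl
  · exact Eventually.of_forall fun n => ⟨p, by simpa using hε⟩
  filter_upwards [(hrt.const_mul_atTop hl).eventually
      (porosityAtInfty_eq_zero_iff.1 h0 (ε / l) (div_pos hε hl)),
    hrt.eventually_gt_atTop 0] with n ⟨_, ⟨x, rfl⟩, hx⟩ hrn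
  refine ⟨x, ?_⟩
  rw [Real.dist_eq, div_sub' hrn.ne', abs_div, abs_of_pos hrn, div_lt_iff₀ hrn]
  calc |dist x p - r n * l| = |dist x p - l * r n| := by rw [mul_comm]
    _ < ε / l * (l * r n) := hx
    _ = ε * r n := by field_simp

theorem exists_lift_mem_seqSet_of_porosityAtInfty_eq_zero
    (h0 : porosityAtInfty {t : ℝ | ∃ x : X, dist x p = t} = 0) {r : ℕ → ℝ}
    (hrt : Tendsto r atTop atTop) {nk : ℕ → ℕ} (hnk : Injective nk) {x : ℕ → X}
    (hx : x ∈ SeqSet p (fun k => r (nk k))) : ∃ y ∈ SeqSet p r, ∀ k, y (nk k) = x k := by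
  obtain ⟨l, hl⟩ := hx
  have hl0 : 0 ≤ l := ge_of_tendsto hl <|
    (hnk.nat_tendsto_atTop.eventually (hrt.eventually_gt_atTop 0)).mono
      fun k hk => div_nonneg dist_nonneg hk.le
  obtain ⟨y, hy⟩ := exists_tendsto_dist_div_of_porosityAtInfty_eq_zero h0 hrt hl0
  refine ⟨extend nk x y, ⟨l, ?_⟩, hnk.extend_apply x y⟩
  rw [← Nat.cofinite_eq_atTop] at hl hy ⊢
  exact hnk.tendsto_extend (g := fun n z => dist z p / r n) hl hy

theorem porosityAtInfty_eq_zero_of_forall_exists_lift (hX : ∀ C : ℝ, ∃ x : X, C < dist x p)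
    (H : ∀ r : ℕ → ℝ, (∀ n, 0 < r n) → Tendsto r atTop atTop →
      ∀ nk : ℕ → ℕ, StrictMono nk →
        ∀ x ∈ SeqSet p (fun k => r (nk k)), ∃ y ∈ SeqSet p r, ∀ k, y (nk k) = x k) :
    porosityAtInfty {t : ℝ | ∃ x : X, dist x p = t} = 0 := by
  refine porosityAtInfty_eq_zero_iff.2 ?_
  by_contra! ⟨ε, hε, hgaps⟩
  choose c hc hcE using fun k : ℕ => frequently_atTop.1 hgaps (k + 1)
  choose z hz using fun k : ℕ => hX k
  have hcpos : ∀ k, 0 < c k := fun k => by linarith [hc k, k.cast_nonneg (α := ℝ)]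
  have hzpos : ∀ k, 0 < dist (z k) p := fun k => k.cast_nonneg.trans_lt (hz k)
  obtain ⟨r, hr, hrt, hr_even, hr_odd⟩ := exists_interleave_of_tendsto_atTop hzpos hcpos
    (tendsto_atTop_mono (fun k => (hz k).le) tendsto_natCast_atTop_atTop)
    (tendsto_atTop_mono (fun k => (le_add_of_nonneg_right zero_le_one).trans (hc k))
      tendsto_natCast_atTop_atTop)
  have hz_ratio : ∀ k, dist (z k) p / r (2 * k) = 1 := fun k => by
    rw [hr_even, div_self (hzpos k).ne']
  obtain ⟨y, ⟨l, hl⟩, hyz⟩ := H r hr hrt (2 * ·) (strictMono_mul_left_of_pos two_pos) z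
    ⟨1, by simp_rw [hz_ratio]; exact tendsto_const_nhds⟩
  have hl1 : l = 1 := tendsto_nhds_unique
    (hl.comp (strictMono_mul_left_of_pos two_pos).tendsto_atTop)
    (by simp [comp_def, hyz, hz_ratio])
  have hodd : Tendsto (fun k => dist (y (2 * k + 1)) p / c k) atTop (𝓝 1) := by
    have hmono : StrictMono (2 * · + 1 : ℕ → ℕ) := fun a b hab => by dsimp only; omega
    simpa [comp_def, hr_odd, hl1] using hl.comp hmono.tendsto_atTop
  exact not_tendsto_div_of_mul_le_abs_sub hε hcpos (fun k => hcE k _ ⟨_, rfl⟩) hodd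

end Lifting

theorem nonporous_iff_subseq_lifting {X : Type*} [MetricSpace X] (p : X)
    (hX : ∀ C : ℝ, ∃ x : X, C < dist x p) :
    porosityAtInfty {t : ℝ | ∃ x : X, dist x p = t} = 0 ↔
    ∀ r : ℕ → ℝ, (∀ n, 0 < r n) → Tendsto r atTop atTop →
      ∀ nk : ℕ → ℕ, StrictMono nk →
        ∀ x ∈ SeqSet p (fun k => r (nk k)),
          ∃ y ∈ SeqSet p r, ∀ k, y (nk k) = x k :=
  ⟨fun h0 _ _ hrt _ hnk _ hx =>
    exists_lift_mem_seqSet_of_porosityAtInfty_eq_zero h0 hrt hnk.injective hx,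
    porosityAtInfty_eq_zero_of_forall_exists_lift hX⟩
end

section
/- Let X = ℝ with the usual metric d(x,y) = |x−y|, let r̃ = (r_n) be a scaling sequence, let F be a maximal self-stable subset of Seq(X,r̃), and let b̃ = (b_n) ∈ F satisfy lim_{n→∞} |b_n|/r_n > 0. Then: (a) for every ỹ = (y_n) ∈ F the finite limit lim_{n→∞} y_n/b_n exists; (b) conversely, if ỹ = (y_n) is a sequence of reals with lim_{n→∞} |y_n| = ∞ and the finite limit lim_{n→∞} y_n/b_n exists, then ỹ ∈ F. -/
/-!
Since `|b n| / r n → L > 0`, any `u` with `|u n| / r n → M` satisfies `|u n / b n| → M / L`.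
For `y ∈ F`, applying this to `y` and to `y - b` shows that `|y / b|` and `|y / b - 1|` converge,
and `y / b` is recovered from them by polarization: `t = (t² - (t - 1)² + 1) / 2`.
Conversely, if `y / b → c`, then `|y| / r → |c| L` and `|x - y| / r → |c_x - c| L` for every
`x ∈ F`, so `y` is mutually stable with all of `F` and maximality puts it into `F`.
-/

open Filter Topology

section MetricSpace

variable {X : Type*} [MetricSpace X]

theorem mutStable_self (r : ℕ → ℝ) (x : ℕ → X) : MutStable r x x :=
  ⟨0, by simp⟩

theorem MutStable.symm {r : ℕ → ℝ} {x y : ℕ → X} (h : MutStable r x y) : MutStable r y x := by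
  obtain ⟨l, hl⟩ := h
  exact ⟨l, by simpa only [dist_comm] using hl⟩

theorem MaxSelfStable.mem_of_forall_mutStable {p : X} {r : ℕ → ℝ} {F : Set (ℕ → X)}
    {y : ℕ → X} (hF : MaxSelfStable p r F) (hy : y ∈ SeqSet p r)
    (hyF : ∀ x ∈ F, MutStable r x y) : y ∈ F := by
  obtain ⟨⟨hFseq, hFstab⟩, hFmax⟩ := hF
  have hG : SelfStable p r (insert y F) := by
    refine ⟨Set.insert_subset hy hFseq, ?_⟩
    rintro u (rfl | hu) v (rfl | hv)
    · exact mutStable_self r _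
    · exact (hyF v hv).symm
    · exact hyF u hu
    · exact hFstab u hu v hv
  rw [hFmax _ hG (Set.subset_insert y F)]
  exact Set.mem_insert y F

end MetricSpace

section Real

variable {r b : ℕ → ℝ} {L : ℝ}

theorem eventually_ne_zero_of_tendsto_abs_div (hL : L ≠ 0)
    (hbL : Tendsto (fun n => |b n| / r n) atTop (𝓝 L)) :
    ∀ᶠ n in atTop, b n ≠ 0 ∧ r n ≠ 0 := by
  filter_upwards [hbL.eventually_ne hL] with n hn
  exact ⟨fun hb => hn (by simp [hb]), fun hr => hn (by simp [hr])⟩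

theorem tendsto_abs_div_of_tendsto_abs_div_scale {u : ℕ → ℝ} {M : ℝ} (hL : L ≠ 0)
    (hbL : Tendsto (fun n => |b n| / r n) atTop (𝓝 L))
    (hu : Tendsto (fun n => |u n| / r n) atTop (𝓝 M)) :
    Tendsto (fun n => |u n / b n|) atTop (𝓝 (M / L)) := by
  refine (hu.div hbL hL).congr' ?_
  filter_upwards [eventually_ne_zero_of_tendsto_abs_div hL hbL] with n hn
  rw [Pi.div_apply, abs_div, div_div_div_cancel_right₀ hn.2]

theorem tendsto_abs_div_scale_of_tendsto_div {u : ℕ → ℝ} {c : ℝ} (hL : L ≠ 0)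
    (hbL : Tendsto (fun n => |b n| / r n) atTop (𝓝 L))
    (hu : Tendsto (fun n => u n / b n) atTop (𝓝 c)) :
    Tendsto (fun n => |u n| / r n) atTop (𝓝 (|c| * L)) := by
  refine (hu.abs.mul hbL).congr' ?_
  filter_upwards [eventually_ne_zero_of_tendsto_abs_div hL hbL] with n hn
  rw [abs_div, div_mul_div_comm, mul_comm |b n|, mul_div_mul_right _ _ (abs_ne_zero.mpr hn.1)]

theorem exists_tendsto_div_of_mutStable {y : ℕ → ℝ} (hL : L ≠ 0)
    (hbL : Tendsto (fun n => |b n| / r n) atTop (𝓝 L))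
    (hy : y ∈ SeqSet (0 : ℝ) r) (hyb : MutStable r y b) :
    ∃ c, Tendsto (fun n => y n / b n) atTop (𝓝 c) := by
  obtain ⟨M, hM⟩ := hy
  obtain ⟨D, hD⟩ := hyb
  simp only [Real.dist_0_eq_abs] at hM
  simp only [Real.dist_eq] at hD
  have hratio := tendsto_abs_div_of_tendsto_abs_div_scale hL hbL hM
  have hratio_sub_one : Tendsto (fun n => |y n / b n - 1|) atTop (𝓝 (D / L)) := by
    refine (tendsto_abs_div_of_tendsto_abs_div_scale hL hbL hD).congr' ?_
    filter_upwards [eventually_ne_zero_of_tendsto_abs_div hL hbL] with n hn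
    rw [sub_div, div_self hn.1]
  refine ⟨((M / L) ^ 2 - (D / L) ^ 2 + 1) / 2, ?_⟩
  refine ((((hratio.pow 2).sub (hratio_sub_one.pow 2)).add_const 1).div_const 2).congr fun n => ?_
  simp only [sq_abs]
  ring

theorem mem_seqSet_of_tendsto_div {y : ℕ → ℝ} {c : ℝ} (hL : L ≠ 0)
    (hbL : Tendsto (fun n => |b n| / r n) atTop (𝓝 L))
    (hy : Tendsto (fun n => y n / b n) atTop (𝓝 c)) : y ∈ SeqSet (0 : ℝ) r :=
  ⟨|c| * L, by
    simpa only [Real.dist_0_eq_abs] using tendsto_abs_div_scale_of_tendsto_div hL hbL hy⟩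

theorem mutStable_of_tendsto_div {x y : ℕ → ℝ} {c c' : ℝ} (hL : L ≠ 0)
    (hbL : Tendsto (fun n => |b n| / r n) atTop (𝓝 L))
    (hx : Tendsto (fun n => x n / b n) atTop (𝓝 c))
    (hy : Tendsto (fun n => y n / b n) atTop (𝓝 c')) : MutStable r x y := by
  have hdiff : Tendsto (fun n => (x n - y n) / b n) atTop (𝓝 (c - c')) := by
    simpa only [sub_div] using hx.sub hy
  exact ⟨|c - c'| * L, by
    simpa only [Real.dist_eq] using tendsto_abs_div_scale_of_tendsto_div hL hbL hdiff⟩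

end Real

theorem maxSelfStable_real_ratio_limits_general (r : ℕ → ℝ)
    (F : Set (ℕ → ℝ)) (hF : MaxSelfStable (0 : ℝ) r F)
    (b : ℕ → ℝ) (hb : b ∈ F) (L : ℝ) (hL : 0 < L)
    (hbL : Tendsto (fun n => |b n| / r n) atTop (𝓝 L)) :
    (∀ y ∈ F, ∃ c : ℝ, Tendsto (fun n => y n / b n) atTop (𝓝 c)) ∧
    (∀ y : ℕ → ℝ, Tendsto (fun n => |y n|) atTop atTop →
      (∃ c : ℝ, Tendsto (fun n => y n / b n) atTop (𝓝 c)) → y ∈ F) := by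
  have ratio_limit : ∀ y ∈ F, ∃ c : ℝ, Tendsto (fun n => y n / b n) atTop (𝓝 c) :=
    fun y hy => exists_tendsto_div_of_mutStable hL.ne' hbL (hF.1.1 hy) (hF.1.2 y hy b hb)
  refine ⟨ratio_limit, fun y _ ⟨c, hc⟩ => hF.mem_of_forall_mutStable ?_ fun x hx => ?_⟩
  · exact mem_seqSet_of_tendsto_div hL.ne' hbL hc
  · obtain ⟨cx, hcx⟩ := ratio_limit x hx
    exact mutStable_of_tendsto_div hL.ne' hbL hcx hc

theorem maxSelfStable_real_ratio_limits (r : ℕ → ℝ)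
    (hr₁ : ∀ n, 0 < r n) (hr₂ : Tendsto r atTop atTop)
    (F : Set (ℕ → ℝ)) (hF : MaxSelfStable (0 : ℝ) r F)
    (b : ℕ → ℝ) (hb : b ∈ F) (L : ℝ) (hL : 0 < L)
    (hbL : Tendsto (fun n => |b n| / r n) atTop (𝓝 L)) :
    (∀ y ∈ F, ∃ c : ℝ, Tendsto (fun n => y n / b n) atTop (𝓝 c)) ∧
    (∀ y : ℕ → ℝ, Tendsto (fun n => |y n|) atTop atTop →
      (∃ c : ℝ, Tendsto (fun n => y n / b n) atTop (𝓝 c)) → y ∈ F) :=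
  maxSelfStable_real_ratio_limits_general r F hF b hb L hL hbL
end

section
/- Let Y₁ and Y₂ be subsets of the real line ℝ endowed with the usual metric |x−y|. If Y₁ and Y₂ are isometric as metric subspaces of ℝ, then ℝ \ Y₁ and ℝ \ Y₂ are also isometric as metric subspaces of ℝ. -/
/-!
An isometry `f` from a subset of `ℝ` into `ℝ` is the restriction of a translation or a
reflection: fixing a base point `a`, each displacement `f x - f a` is `±(x - a)`, and two
points `x`, `b` with opposite signs would give `|(x - a) + (b - a)| = |(x - a) - (b - a)|`,
forcing `x = a` or `b = a`. The resulting isometry of `ℝ` maps `Y₁` onto `Y₂`, hence `Y₁ᶜ`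
onto `Y₂ᶜ`.
-/

def IsometryEquiv.subtypeEquiv {α β : Type*} [PseudoEMetricSpace α] [PseudoEMetricSpace β]
    (e : α ≃ᵢ β) {p : α → Prop} {q : β → Prop} (h : ∀ a, p a ↔ q (e a)) :
    {a // p a} ≃ᵢ {b // q b} where
  toEquiv := e.toEquiv.subtypeEquiv h
  isometry_toFun := fun x y => e.isometry x y

theorem mul_eq_zero_of_abs_add_eq_abs_sub {α : Type*} [CommRing α] [LinearOrder α]
    [IsStrictOrderedRing α] {u v : α} (h : |u + v| = |u - v|) : u * v = 0 := by
  have hsq : (u + v) ^ 2 = (u - v) ^ 2 := by rw [← sq_abs, h, sq_abs]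
  have h4 : (4 : α) * (u * v) = 0 := by linear_combination hsq
  exact (mul_eq_zero.1 h4).resolve_left (by norm_num)

theorem Isometry.exists_isometryEquiv_real_extend {s : Set ℝ} {f : s → ℝ} (hf : Isometry f) :
    ∃ e : ℝ ≃ᵢ ℝ, ∀ x : s, e x = f x := by
  rcases isEmpty_or_nonempty s with _ | ⟨⟨a⟩⟩
  · exact ⟨IsometryEquiv.refl ℝ, fun x => isEmptyElim x⟩
  have hdist : ∀ x y : s, |f x - f y| = |(x : ℝ) - y| := fun x y => by
    simpa only [Subtype.dist_eq, Real.dist_eq] using hf.dist_eq x y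
  by_cases htrans : ∀ x : s, f x - f a = x - a
  · refine ⟨IsometryEquiv.addRight (f a - a), fun x => ?_⟩
    rw [IsometryEquiv.addRight_apply]
    linarith [htrans x]
  obtain ⟨b, hb⟩ := not_forall.1 htrans
  have hb' : f b - f a = -(b - a) := (abs_eq_abs.1 (hdist b a)).resolve_left hb
  have hba : (b : ℝ) - a ≠ 0 := fun h0 => hb (by rw [hb', h0, neg_zero])
  refine ⟨IsometryEquiv.subLeft (f a + a), fun x => ?_⟩
  suffices hx : f x - f a = -(x - a) by rw [IsometryEquiv.subLeft_apply]; linarith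
  rcases abs_eq_abs.1 (hdist x a) with hx | hx
  · have hprod : ((x : ℝ) - a) * (b - a) = 0 := by
      refine mul_eq_zero_of_abs_add_eq_abs_sub ?_
      calc |(x : ℝ) - a + (b - a)| = |f x - f b| := by congr 1; linarith
        _ = |(x : ℝ) - b| := hdist x b
        _ = |(x : ℝ) - a - (b - a)| := by congr 1; ring
    have hxa : (x : ℝ) - a = 0 := (mul_eq_zero.1 hprod).resolve_right hba
    linarith
  · exact hx

/-- If two subsets of the real line (with the induced metric) are isometric, then so
are their complements. -/
theorem isometric_compl_of_isometric (Y₁ Y₂ : Set ℝ)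
    (h : Nonempty (↥Y₁ ≃ᵢ ↥Y₂)) :
    Nonempty (↥(Y₁ᶜ) ≃ᵢ ↥(Y₂ᶜ)) := by
  obtain ⟨f⟩ := h
  obtain ⟨e, he⟩ := (isometry_subtype_coe.comp f.isometry).exists_isometryEquiv_real_extend
  have hmem : ∀ x, x ∈ Y₁ ↔ e x ∈ Y₂ := fun x => by
    refine ⟨fun hx => he ⟨x, hx⟩ ▸ (f ⟨x, hx⟩).2, fun hx => ?_⟩
    have : e (f.symm ⟨e x, hx⟩) = e x := by rw [he]; simp
    exact e.injective this ▸ (f.symm ⟨e x, hx⟩).2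
  exact ⟨e.subtypeEquiv fun x => not_congr (hmem x)⟩
end

section
/- Let Y be an unbounded subset of the real line ℝ, regarded as a metric subspace with the usual metric |x−y|. Then the following conditions are equivalent: (1) Y is isometric to ℝ or to ℝ₊ = [0,∞); (2) for every scaling sequence r̃ and every maximal self-stable subset F of Seq(Y,r̃), there exists a surjective mapping Φ : F → Y such that |Φ(x̃) − Φ(ỹ)| = d_r̃(x̃,ỹ) for all x̃, ỹ ∈ F (equivalently, the metric identification of the pseudometric space (F, d_r̃) is isometric to Y). -/
/-!
Fix signs `ε n = ±1` and put `s n = ε n / r n`. From the limits of `|x₀ n| / r n`,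
`|x n| / r n` and `|x₀ n - x n| / r n`, polarization recovers the limit of `s n * x n` as soon as
that of `s n * x₀ n` is nonzero; so the sequences along which `s n * x n` converges form a
maximal self-stable family, whose pretangent space is the closed set of these limits. When `Y` is
a line or a closed half-line, every maximal self-stable family is of this kind, with limit set
`ℝ` or `[0, ∞)`.

Conversely, take `y n ∈ Y` with `|y n| → ∞` and `s n = (y n)⁻¹`. Replacing `s` by `μ s` dilates
the limit set `B` by `μ`, so if every pretangent space is isometric to `Y`, then `B` is isometric
to all its dilates. Isometries between subsets of `ℝ` are affine, so `B` has affine symmetries of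
every slope. If one of them is a nontrivial translation, conjugating it by the others yields all
translations and `B = ℝ`; otherwise all symmetries commute, hence fix a common point `p`, and `B`
is a closed cone with vertex `p`: a line or a closed half-line.
-/

open Filter Topology

/-- `Seq(Y, r̃)` for a subset `Y` of the real line: the set of sequences of points
of `Y` for which the finite limit `lim |x n| / r n = lim dist (x n) 0 / r n` exists. -/
def SeqY (Y : Set ℝ) (r : ℕ → ℝ) : Set (ℕ → ℝ) :=
  {x | (∀ n, x n ∈ Y) ∧ ∃ l : ℝ, Tendsto (fun n => |x n| / r n) atTop (𝓝 l)}

/-- Two sequences of reals are mutually stable with respect to `r` if the finite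
limit `lim |x n - y n| / r n` exists. -/
def MutStableR (r : ℕ → ℝ) (x y : ℕ → ℝ) : Prop :=
  ∃ l : ℝ, Tendsto (fun n => |x n - y n| / r n) atTop (𝓝 l)

/-- A self-stable subset of `Seq(Y, r̃)`. -/
def SelfStableY (Y : Set ℝ) (r : ℕ → ℝ) (F : Set (ℕ → ℝ)) : Prop :=
  F ⊆ SeqY Y r ∧ ∀ x ∈ F, ∀ y ∈ F, MutStableR r x y

/-- A maximal self-stable subset of `Seq(Y, r̃)`. -/
def MaxSelfStableY (Y : Set ℝ) (r : ℕ → ℝ) (F : Set (ℕ → ℝ)) : Prop :=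
  SelfStableY Y r F ∧ ∀ G, SelfStableY Y r G → F ⊆ G → F = G

open Set Metric Function

/-- `2ab = a² + |b|² - |a - b|²` recovers `b` wherever `a ≠ 0`. -/
theorem tendsto_of_tendsto_abs_of_tendsto_abs_sub {ι : Type*} {l : Filter ι} {a b : ι → ℝ}
    {p q m : ℝ} (hp : p ≠ 0) (ha : Tendsto a l (𝓝 p)) (hb : Tendsto (fun i => |b i|) l (𝓝 q))
    (hab : Tendsto (fun i => |a i - b i|) l (𝓝 m)) :
    Tendsto b l (𝓝 ((p ^ 2 + q ^ 2 - m ^ 2) / (2 * p))) := by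
  have hlim := (((ha.pow 2).add (hb.pow 2)).sub (hab.pow 2)).div (ha.const_mul 2)
    (mul_ne_zero two_ne_zero hp)
  refine hlim.congr' ?_
  filter_upwards [ha.eventually_ne hp] with i hi
  simp only [Pi.div_apply, sq_abs]
  field_simp
  ring

theorem tendsto_div_of_bddBelow {r z : ℕ → ℝ} {b l : ℝ} (hr : ∀ n, 0 < r n)
    (hr' : Tendsto r atTop atTop) (hb : ∀ n, b ≤ z n)
    (hz : Tendsto (fun n => |z n| / r n) atTop (𝓝 l)) :
    Tendsto (fun n => z n / r n) atTop (𝓝 l) := by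
  have hgap : Tendsto (fun n => (|z n| - z n) / r n) atTop (𝓝 0) := by
    refine squeeze_zero (fun n => div_nonneg (by linarith [le_abs_self (z n)]) (hr n).le)
      (fun n => div_le_div_of_nonneg_right (b := 2 * |b|) ?_ (hr n).le)
      (tendsto_const_nhds.div_atTop hr')
    rcases abs_cases (z n) with ⟨h, -⟩ | ⟨h, -⟩ <;> linarith [hb n, neg_abs_le b, abs_nonneg b]
  simpa [sub_div] using hz.sub hgap

theorem tendsto_abs_sub_div_of_tendsto_zero {r x z : ℕ → ℝ} {p : ℝ} (hr : ∀ n, 0 < r n)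
    (hz : Tendsto (fun n => |z n| / r n) atTop (𝓝 p))
    (hx : Tendsto (fun n => |x n| / r n) atTop (𝓝 0)) :
    Tendsto (fun n => |z n - x n| / r n) atTop (𝓝 p) := by
  refine hz.congr_dist (squeeze_zero (fun _ => dist_nonneg) (fun n => ?_) hx)
  rw [Real.dist_eq, ← sub_div, abs_div, abs_of_pos (hr n)]
  exact div_le_div_of_nonneg_right (by simpa using abs_abs_sub_abs_le_abs_sub (z n) (z n - x n))
    (hr n).le

def scaledSeq (Y : Set ℝ) (s : ℕ → ℝ) : Set (ℕ → ℝ) :=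
  {x | (∀ n, x n ∈ Y) ∧ ∃ t, Tendsto (fun n => s n * x n) atTop (𝓝 t)}

def scaledLimits (Y : Set ℝ) (s : ℕ → ℝ) : Set ℝ :=
  {t | ∃ x : ℕ → ℝ, (∀ n, x n ∈ Y) ∧ Tendsto (fun n => s n * x n) atTop (𝓝 t)}

def PretangentIsometric (Y : Set ℝ) (r : ℕ → ℝ) (F : Set (ℕ → ℝ)) : Prop :=
  ∃ Φ : F → Y, Surjective Φ ∧ ∀ x y : F,
    Tendsto (fun n => |(x : ℕ → ℝ) n - (y : ℕ → ℝ) n| / r n) atTop (𝓝 (dist (Φ x) (Φ y)))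

theorem abs_mul_eq_abs_div {s r : ℝ} (h : |s| = r⁻¹) (x : ℝ) : |s * x| = |x| / r := by
  rw [abs_mul, h, inv_mul_eq_div]

section Scaled

variable {Y : Set ℝ} {r s x₀ : ℕ → ℝ} {p : ℝ}

theorem selfStable_scaledSeq (hsr : ∀ n, |s n| = (r n)⁻¹) : SelfStableY Y r (scaledSeq Y s) := by
  refine ⟨fun x ⟨hxY, t, ht⟩ => ⟨hxY, |t|, ?_⟩, fun x ⟨_, t, ht⟩ y ⟨_, u, hu⟩ => ⟨|t - u|, ?_⟩⟩
  · simpa only [abs_mul_eq_abs_div (hsr _)] using ht.abs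
  · simpa only [← mul_sub, abs_mul_eq_abs_div (hsr _)] using (ht.sub hu).abs

theorem subset_scaledSeq_of_tendsto {G : Set (ℕ → ℝ)} (hsr : ∀ n, |s n| = (r n)⁻¹)
    (hG : SelfStableY Y r G) (hx₀ : x₀ ∈ G) (hp : p ≠ 0)
    (hlim : Tendsto (fun n => s n * x₀ n) atTop (𝓝 p)) : G ⊆ scaledSeq Y s := by
  intro z hz
  obtain ⟨hzY, l, hl⟩ := hG.1 hz
  obtain ⟨m, hm⟩ := hG.2 x₀ hx₀ z hz
  simp only [← abs_mul_eq_abs_div (hsr _), mul_sub] at hl hm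
  exact ⟨hzY, _, tendsto_of_tendsto_abs_of_tendsto_abs_sub hp hlim hl hm⟩

theorem maxSelfStable_scaledSeq (hsr : ∀ n, |s n| = (r n)⁻¹) (hx₀ : ∀ n, x₀ n ∈ Y) (hp : p ≠ 0)
    (hlim : Tendsto (fun n => s n * x₀ n) atTop (𝓝 p)) : MaxSelfStableY Y r (scaledSeq Y s) :=
  ⟨selfStable_scaledSeq hsr, fun _ hG hsub => hsub.antisymm
    (subset_scaledSeq_of_tendsto hsr hG (hsub ⟨hx₀, p, hlim⟩) hp hlim)⟩

theorem MaxSelfStableY.eq_scaledSeq {F : Set (ℕ → ℝ)} (hF : MaxSelfStableY Y r F)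
    (hsr : ∀ n, |s n| = (r n)⁻¹) (hx₀ : x₀ ∈ F) (hp : p ≠ 0)
    (hlim : Tendsto (fun n => s n * x₀ n) atTop (𝓝 p)) : F = scaledSeq Y s :=
  hF.2 _ (selfStable_scaledSeq hsr) (subset_scaledSeq_of_tendsto hsr hF.1 hx₀ hp hlim)

/-- If every member of `F` were `o(r)`, the sequence `z` could be added to `F`. -/
theorem MaxSelfStableY.exists_tendsto_ne_zero {F : Set (ℕ → ℝ)} {z : ℕ → ℝ}
    (hF : MaxSelfStableY Y r F) (hr : ∀ n, 0 < r n) (hzY : ∀ n, z n ∈ Y) (hp : p ≠ 0)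
    (hz : Tendsto (fun n => |z n| / r n) atTop (𝓝 p)) :
    ∃ x₀ ∈ F, ∃ q ≠ 0, Tendsto (fun n => |x₀ n| / r n) atTop (𝓝 q) := by
  by_contra! hsmall
  have hzero : ∀ x ∈ F, Tendsto (fun n => |x n| / r n) atTop (𝓝 0) := by
    intro x hx
    obtain ⟨-, l, hl⟩ := hF.1.1 hx
    obtain rfl : l = 0 := by_contra fun hl0 => hsmall x hx l hl0 hl
    exact hl
  have hstable : SelfStableY Y r (insert z F) := by
    refine ⟨Set.insert_subset ⟨hzY, p, hz⟩ hF.1.1, ?_⟩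
    rintro x (rfl | hx) y (rfl | hy)
    · exact ⟨0, by simp⟩
    · exact ⟨p, tendsto_abs_sub_div_of_tendsto_zero hr hz (hzero y hy)⟩
    · exact ⟨p, by simpa only [abs_sub_comm] using
        tendsto_abs_sub_div_of_tendsto_zero hr hz (hzero x hx)⟩
    · exact hF.1.2 x hx y hy
  have hzF : z ∈ F := (hF.2 _ hstable (Set.subset_insert z F)).symm ▸ Set.mem_insert z F
  exact hsmall z hzF p hp hz

end Scaled

theorem Function.Surjective.exists_surjective_dist_eq_iff {α β γ : Type*} [MetricSpace β]
    [MetricSpace γ] {ψ : α → β} (hψ : Surjective ψ) :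
    (∃ Φ : α → γ, Surjective Φ ∧ ∀ x y, dist (Φ x) (Φ y) = dist (ψ x) (ψ y)) ↔
      Nonempty (β ≃ᵢ γ) := by
  refine ⟨fun ⟨Φ, hΦ, hdist⟩ => ?_,
    fun ⟨e⟩ => ⟨e ∘ ψ, e.surjective.comp hψ, fun _ _ => e.dist_eq _ _⟩⟩
  have hg : Isometry (Φ ∘ surjInv hψ) :=
    Isometry.of_dist_eq fun a b => by simp only [comp_apply, hdist, surjInv_eq]
  have hsurj : Surjective (Φ ∘ surjInv hψ) := by
    intro z
    obtain ⟨x, rfl⟩ := hΦ z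
    refine ⟨ψ x, dist_eq_zero.mp ?_⟩
    simp only [comp_apply, hdist, surjInv_eq, dist_self]
  exact ⟨{ Equiv.ofBijective _ ⟨hg.injective, hsurj⟩ with isometry_toFun := hg }⟩

section Pretangent

variable {Y : Set ℝ} {r s : ℕ → ℝ}

theorem exists_surjective_tendsto_scaledLimits :
    ∃ ψ : scaledSeq Y s → scaledLimits Y s, Surjective ψ ∧
      ∀ x : scaledSeq Y s, Tendsto (fun n => s n * (x : ℕ → ℝ) n) atTop (𝓝 (ψ x : ℝ)) := by
  choose ψ hψ using fun x : scaledSeq Y s => x.2.2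
  refine ⟨fun x => ⟨ψ x, x, x.2.1, hψ x⟩, fun ⟨t, x, hxY, hxt⟩ => ⟨⟨x, hxY, t, hxt⟩, ?_⟩, hψ⟩
  exact Subtype.ext (tendsto_nhds_unique (hψ _) hxt)

theorem pretangentIsometric_scaledSeq_iff (hsr : ∀ n, |s n| = (r n)⁻¹) :
    PretangentIsometric Y r (scaledSeq Y s) ↔ Nonempty (scaledLimits Y s ≃ᵢ Y) := by
  obtain ⟨ψ, hψ, hlim⟩ := exists_surjective_tendsto_scaledLimits (Y := Y) (s := s)
  have hdist : ∀ x y : scaledSeq Y s, Tendsto (fun n => |(x : ℕ → ℝ) n - (y : ℕ → ℝ) n| / r n)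
      atTop (𝓝 (dist (ψ x) (ψ y))) := fun x y => by
    simpa only [Subtype.dist_eq, Real.dist_eq, ← mul_sub, abs_mul_eq_abs_div (hsr _)]
      using ((hlim x).sub (hlim y)).abs
  constructor
  · rintro ⟨Φ, hΦ, hlimΦ⟩
    exact hψ.exists_surjective_dist_eq_iff.mp
      ⟨Φ, hΦ, fun x y => tendsto_nhds_unique (hlimΦ x y) (hdist x y)⟩
  · intro he
    obtain ⟨Φ, hΦ, hΦψ⟩ := hψ.exists_surjective_dist_eq_iff.mpr he
    exact ⟨Φ, hΦ, fun x y => hΦψ x y ▸ hdist x y⟩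

end Pretangent

section Limits

variable {Y : Set ℝ} {s : ℕ → ℝ}

theorem zero_mem_scaledLimits (hs : Tendsto s atTop (𝓝 0)) {y : ℝ} (hy : y ∈ Y) :
    (0 : ℝ) ∈ scaledLimits Y s :=
  ⟨fun _ => y, fun _ => hy, by simpa using hs.mul_const y⟩

theorem scaledLimits_univ (hs : ∀ n, s n ≠ 0) : scaledLimits univ s = univ :=
  eq_univ_of_forall fun t => ⟨fun n => t / s n, fun _ => trivial,
    tendsto_const_nhds.congr fun n => (mul_div_cancel₀ t (hs n)).symm⟩

theorem scaledLimits_const_mul {μ : ℝ} (hμ : μ ≠ 0) :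
    scaledLimits Y (fun n => μ * s n) = (μ * ·) '' scaledLimits Y s := by
  ext t
  constructor
  · rintro ⟨x, hxY, hx⟩
    refine ⟨t / μ, ⟨x, hxY, ?_⟩, mul_div_cancel₀ t hμ⟩
    simpa [mul_assoc, div_eq_inv_mul, hμ] using hx.const_mul μ⁻¹
  · rintro ⟨t, ⟨x, hxY, hx⟩, rfl⟩
    exact ⟨x, hxY, by simpa only [mul_assoc] using hx.const_mul μ⟩

theorem mem_scaledLimits_iff (hY : Y.Nonempty) {t : ℝ} :
    t ∈ scaledLimits Y s ↔ Tendsto (fun n => infDist t ((s n * ·) '' Y)) atTop (𝓝 0) := by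
  constructor
  · rintro ⟨x, hxY, hx⟩
    refine squeeze_zero (fun _ => infDist_nonneg)
      (fun n => infDist_le_dist_of_mem (mem_image_of_mem _ (hxY n))) ?_
    simpa only [dist_comm t] using tendsto_iff_dist_tendsto_zero.mp hx
  · intro h
    have hlt : ∀ n : ℕ, ∃ y ∈ Y, dist t (s n * y) < infDist t ((s n * ·) '' Y) + 1 / (n + 1) :=
      fun n => by
        obtain ⟨_, ⟨y, hy, rfl⟩, hlt⟩ := (infDist_lt_iff (x := t) (hY.image (s n * ·))).mp
          (lt_add_of_pos_right _ (Nat.one_div_pos_of_nat (α := ℝ) (n := n)))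
        exact ⟨y, hy, hlt⟩
    choose x hxY hx using hlt
    refine ⟨x, hxY, tendsto_iff_dist_tendsto_zero.mpr ?_⟩
    simpa [dist_comm t] using squeeze_zero (fun _ => dist_nonneg) (fun n => (hx n).le)
      (by simpa using h.add tendsto_one_div_add_atTop_nhds_zero_nat)

theorem isClosed_scaledLimits : IsClosed (scaledLimits Y s) := by
  rcases Y.eq_empty_or_nonempty with rfl | hY
  · convert isClosed_empty
    exact eq_empty_of_forall_notMem fun t ⟨x, hx, _⟩ => hx 0
  refine isClosed_of_closure_subset fun t ht => (mem_scaledLimits_iff hY).mpr ?_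
  refine Metric.tendsto_atTop.mpr fun δ hδ => ?_
  obtain ⟨u, hu, htu⟩ := Metric.mem_closure_iff.mp ht (δ / 2) (half_pos hδ)
  obtain ⟨N, hN⟩ := Metric.tendsto_atTop.mp ((mem_scaledLimits_iff hY).mp hu) (δ / 2)
    (half_pos hδ)
  refine ⟨N, fun n hn => ?_⟩
  have hu' := hN n hn
  rw [Real.dist_eq, sub_zero, abs_of_nonneg infDist_nonneg] at hu' ⊢
  linarith [infDist_le_infDist_add_dist (x := t) (y := u) (s := (s n * ·) '' Y)]

end Limits

theorem Isometry.exists_eq_mul_add {S : Set ℝ} {f : S → ℝ} (hf : Isometry f) {x₁ x₂ : S}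
    (hne : x₁ ≠ x₂) : ∃ σ c : ℝ, |σ| = 1 ∧ ∀ x, f x = σ * x + c := by
  have habs : ∀ x y : S, |f x - f y| = |(x : ℝ) - y| := fun x y => by
    rw [← Real.dist_eq, hf.dist_eq, Subtype.dist_eq, Real.dist_eq]
  have hsq : ∀ x y : S, (f x - f y) ^ 2 = ((x : ℝ) - y) ^ 2 := fun x y => by
    rw [← sq_abs, habs, sq_abs]
  have hk : (x₂ : ℝ) - x₁ ≠ 0 := sub_ne_zero.mpr (Subtype.coe_ne_coe.mpr hne.symm)
  refine ⟨(f x₂ - f x₁) / (x₂ - x₁), f x₁ - (f x₂ - f x₁) / (x₂ - x₁) * x₁, ?_, fun x => ?_⟩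
  · rw [abs_div, habs, div_self (abs_ne_zero.mpr hk)]
  · have hprod : (f x - f x₁) * (f x₂ - f x₁) = (x - x₁) * (x₂ - x₁) := by
      linear_combination (hsq x x₁ + hsq x₂ x₁ - hsq x x₂) / 2
    field_simp
    refine mul_left_cancel₀ hk ?_
    linear_combination (f x₂ - f x₁) * hprod - (f x - f x₁) * hsq x₂ x₁

theorem IsometryEquiv.exists_eq_image_mul_add {S T : Set ℝ} (e : S ≃ᵢ T) {x₁ x₂ : ℝ}
    (h₁ : x₁ ∈ S) (h₂ : x₂ ∈ S) (hne : x₁ ≠ x₂) :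
    ∃ σ c : ℝ, |σ| = 1 ∧ T = (fun x => σ * x + c) '' S := by
  obtain ⟨σ, c, hσ, he⟩ := (isometry_subtype_coe.comp e.isometry).exists_eq_mul_add
    (x₁ := ⟨x₁, h₁⟩) (x₂ := ⟨x₂, h₂⟩) (by simpa using hne)
  refine ⟨σ, c, hσ, Set.ext fun t => ⟨fun ht => ?_, ?_⟩⟩
  · exact ⟨e.symm ⟨t, ht⟩, (e.symm _).2, by simpa using (he (e.symm ⟨t, ht⟩)).symm⟩
  · rintro ⟨x, hx, rfl⟩
    have hx' := (e ⟨x, hx⟩).2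
    rwa [show ((e ⟨x, hx⟩ : T) : ℝ) = σ * x + c from he ⟨x, hx⟩] at hx'

theorem nonempty_isometryEquiv_image_mul_add {σ : ℝ} (hσ : |σ| = 1) (c : ℝ) (S : Set ℝ) :
    Nonempty (S ≃ᵢ (fun x => σ * x + c) '' S) := by
  have hf : Isometry fun x : S => σ * x + c := Isometry.of_dist_eq fun x y => by
    rw [Real.dist_eq, Subtype.dist_eq, Real.dist_eq, add_sub_add_right_eq_sub, ← mul_sub,
      abs_mul, hσ, one_mul]
  rw [image_eq_range]
  exact ⟨hf.isometryEquivOnRange⟩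

theorem nonempty_univ_isometryEquiv : Nonempty ((univ : Set ℝ) ≃ᵢ ℝ) :=
  ⟨{ Equiv.Set.univ ℝ with isometry_toFun := isometry_subtype_coe }⟩

theorem nonempty_Ici_isometryEquiv (p : ℝ) : Nonempty (Ici p ≃ᵢ Ici (0 : ℝ)) := by
  obtain ⟨e⟩ := nonempty_isometryEquiv_image_mul_add (abs_one (α := ℝ)) p (Ici 0)
  rw [show (fun x : ℝ => 1 * x + p) '' Ici 0 = Ici p by simp] at e
  exact ⟨e.symm⟩

theorem nonempty_Iic_isometryEquiv (p : ℝ) : Nonempty (Iic p ≃ᵢ Ici (0 : ℝ)) := by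
  obtain ⟨e⟩ := nonempty_isometryEquiv_image_mul_add (by norm_num : |(-1 : ℝ)| = 1) p (Ici 0)
  rw [show (fun x : ℝ => -1 * x + p) '' Ici 0 = Iic p by
    simp [neg_add_eq_sub]] at e
  exact ⟨e.symm⟩

def IsAffineSymm (B : Set ℝ) (a b : ℝ) : Prop :=
  (fun x => a * x + b) '' B = B

namespace IsAffineSymm

variable {B : Set ℝ} {a b a' b' d : ℝ}

theorem mem (h : IsAffineSymm B a b) {x : ℝ} (hx : x ∈ B) : a * x + b ∈ B :=
  h ▸ mem_image_of_mem _ hx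

theorem comp (h : IsAffineSymm B a b) (h' : IsAffineSymm B a' b') :
    IsAffineSymm B (a * a') (a * b' + b) := by
  have hcomp : (fun x => a * a' * x + (a * b' + b)) = (fun x => a * x + b) ∘ fun x => a' * x + b' :=
    funext fun x => by simp only [comp_apply]; ring
  rw [IsAffineSymm, hcomp, image_comp, h', h]

theorem inv (ha : a ≠ 0) (h : IsAffineSymm B a b) : IsAffineSymm B a⁻¹ (-b / a) := by
  have hid : ((fun x => a⁻¹ * x + -b / a) ∘ fun x => a * x + b) = id :=
    funext fun x => by simp only [comp_apply, id_eq]; field_simp; ring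
  rw [IsAffineSymm]
  nth_rw 1 [← h]
  rw [← image_comp, hid, image_id]

theorem translation_neg (h : IsAffineSymm B 1 d) : IsAffineSymm B 1 (-d) := by
  simpa using h.inv one_ne_zero

/-- Conjugating a translation by a symmetry of slope `a` rescales it by `a`. -/
theorem translation_conj (ha : a ≠ 0) (h : IsAffineSymm B a b) (hd : IsAffineSymm B 1 d) :
    IsAffineSymm B 1 (a * d) := by
  convert (h.comp hd).comp (h.inv ha) using 1 <;> field_simp; ring

/-- The commutator of two symmetries is a translation, hence trivial. -/
theorem translation_comm (hno : ∀ d, IsAffineSymm B 1 d → d = 0) (ha : a ≠ 0) (ha' : a' ≠ 0)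
    (h : IsAffineSymm B a b) (h' : IsAffineSymm B a' b') : a * b' + b = a' * b + b' := by
  have hcomm := (h.comp h').comp ((h'.comp h).inv (mul_ne_zero ha' ha))
  rw [show a * a' * (a' * a)⁻¹ = 1 by field_simp] at hcomm
  have := hno _ hcomm
  field_simp at this
  linarith

end IsAffineSymm

section Classification

variable {B : Set ℝ}

theorem exists_isAffineSymm_of_isometryEquiv_dilate {x y : ℝ} (hx : x ∈ B) (hy : y ∈ B)
    (hxy : x ≠ y) (hdil : ∀ μ > 0, Nonempty ((μ * ·) '' B ≃ᵢ B)) :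
    ∀ μ > 0, ∃ a b, |a| = μ ∧ IsAffineSymm B a b := fun μ hμ => by
  obtain ⟨e⟩ := hdil μ hμ
  obtain ⟨σ, c, hσ, hB⟩ := e.exists_eq_image_mul_add (mem_image_of_mem _ hx)
    (mem_image_of_mem _ hy) (by simpa [hμ.ne'] using hxy)
  refine ⟨σ * μ, c, by rw [abs_mul, hσ, one_mul, abs_of_pos hμ], ?_⟩
  rw [IsAffineSymm]
  conv_rhs => rw [hB, image_image]
  simp only [mul_assoc]

theorem eq_univ_of_isAffineSymm_translation
    (hscale : ∀ μ > 0, ∃ a b, |a| = μ ∧ IsAffineSymm B a b) {d : ℝ} (hd0 : d ≠ 0)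
    (hd : IsAffineSymm B 1 d) {x₀ : ℝ} (hx₀ : x₀ ∈ B) : B = univ := by
  refine eq_univ_of_forall fun v => ?_
  rcases eq_or_ne (v - x₀) 0 with hv | hv
  · rwa [sub_eq_zero.mp hv]
  obtain ⟨a, b, ha, hab⟩ := hscale |(v - x₀) / d| (abs_pos.mpr (div_ne_zero hv hd0))
  have ha0 : a ≠ 0 := by rw [← abs_ne_zero, ha]; exact abs_ne_zero.mpr (div_ne_zero hv hd0)
  have hshift := hab.translation_conj ha0 hd
  have hv' : |a * d| = |v - x₀| := by
    rw [abs_mul, ha, abs_div, div_mul_cancel₀ _ (abs_ne_zero.mpr hd0)]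
  rcases abs_eq_abs.mp hv' with h | h
  · simpa [h] using (hshift.mem hx₀)
  · simpa [h] using (hshift.translation_neg.mem hx₀)

/-- `p` is the fixed point of a symmetry of slope `±2`, which every symmetry commutes with; the
square of a symmetry of slope `±√u` is then the homothety of ratio `u` about `p`. -/
theorem exists_forall_isAffineSymm_scale
    (hscale : ∀ μ > 0, ∃ a b, |a| = μ ∧ IsAffineSymm B a b)
    (hno : ∀ d, IsAffineSymm B 1 d → d = 0) :
    ∃ p, ∀ u > 0, IsAffineSymm B u (p * (1 - u)) := by
  obtain ⟨a₂, b₂, ha₂, h₂⟩ := hscale 2 two_pos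
  have ha₂0 : a₂ ≠ 0 := by rintro rfl; norm_num at ha₂
  have ha₂1 : 1 - a₂ ≠ 0 := by rintro h; rw [← sub_eq_zero.mp h] at ha₂; norm_num at ha₂
  refine ⟨b₂ / (1 - a₂), fun u hu => ?_⟩
  obtain ⟨a, b, ha, h⟩ := hscale √u (Real.sqrt_pos.mpr hu)
  have ha0 : a ≠ 0 := by rw [← abs_ne_zero, ha]; exact (Real.sqrt_pos.mpr hu).ne'
  have hfix := IsAffineSymm.translation_comm hno ha0 ha₂0 h h₂
  have hsq : a * a = u := by rw [← abs_mul_abs_self, ha, Real.mul_self_sqrt hu.le]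
  convert h.comp h using 1
  · exact hsq.symm
  · rw [div_mul_eq_mul_div, div_eq_iff ha₂1]
    linear_combination -(1 + a) * hfix + b₂ * hsq

theorem eq_univ_or_Ici_or_Iic_of_isAffineSymm_scale (hB : IsClosed B) {p q : ℝ} (hq : q ∈ B)
    (hqp : q ≠ p) (hsc : ∀ u > 0, IsAffineSymm B u (p * (1 - u))) :
    B = univ ∨ B = Ici p ∨ B = Iic p := by
  have hray : ∀ q ∈ B, ∀ w, 0 < (w - p) / (q - p) → w ∈ B := fun q hq w hw => by
    have hqp : q - p ≠ 0 := by rintro h; simp [h] at hw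
    convert (hsc _ hw).mem hq using 1
    field_simp
    ring
  have hpB : p ∈ B := by
    refine hB.mem_of_tendsto (b := atTop) (f := fun n : ℕ => p + (q - p) / (n + 1)) ?_
      (Eventually.of_forall fun n => hray q hq _ ?_)
    · simpa [div_eq_mul_inv] using tendsto_const_nhds.add
        ((tendsto_one_div_add_atTop_nhds_zero_nat (𝕜 := ℝ)).const_mul (q - p))
    · rw [add_sub_cancel_left, div_div_cancel_left' (sub_ne_zero.mpr hqp)]
      positivity
  have hright : (∃ q ∈ B, p < q) → Ici p ⊆ B := fun ⟨q, hq, hpq⟩ w hw =>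
    (eq_or_lt_of_le (mem_Ici.mp hw)).elim (fun h => h ▸ hpB) fun hpw =>
      hray q hq w (div_pos (by linarith) (by linarith))
  have hleft : (∃ q ∈ B, q < p) → Iic p ⊆ B := fun ⟨q, hq, hqp⟩ w hw =>
    (eq_or_lt_of_le (mem_Iic.mp hw)).elim (fun h => h ▸ hpB) fun hwp =>
      hray q hq w (div_pos_of_neg_of_neg (by linarith) (by linarith))
  by_cases hR : ∃ q ∈ B, p < q <;> by_cases hL : ∃ q ∈ B, q < p
  · exact Or.inl (eq_univ_of_forall fun w =>
      (le_total p w).elim (fun h => hright hR h) (fun h => hleft hL h))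
  · push Not at hL
    exact Or.inr (Or.inl (Subset.antisymm (fun w hw => hL w hw) (hright hR)))
  · push Not at hR
    exact Or.inr (Or.inr (Subset.antisymm (fun w hw => hR w hw) (hleft hL)))
  · push Not at hR hL
    exact absurd (le_antisymm (hR q hq) (hL q hq)) hqp

theorem eq_univ_or_Ici_or_Iic_of_isAffineSymm (hB : IsClosed B) {x y : ℝ} (hx : x ∈ B)
    (hy : y ∈ B) (hxy : x ≠ y) (hscale : ∀ μ > 0, ∃ a b, |a| = μ ∧ IsAffineSymm B a b) :
    B = univ ∨ (∃ p, B = Ici p) ∨ ∃ p, B = Iic p := by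
  by_cases htr : ∃ d ≠ 0, IsAffineSymm B 1 d
  · obtain ⟨d, hd0, hd⟩ := htr
    exact Or.inl (eq_univ_of_isAffineSymm_translation hscale hd0 hd hx)
  push Not at htr
  obtain ⟨p, hsc⟩ :=
    exists_forall_isAffineSymm_scale hscale fun d hd => by_contra fun h => htr d h hd
  obtain ⟨q, hq, hqp⟩ : ∃ q ∈ B, q ≠ p := by
    by_cases hxp : x = p
    · exact ⟨y, hy, hxp ▸ hxy.symm⟩
    · exact ⟨x, hx, hxp⟩
  rcases eq_univ_or_Ici_or_Iic_of_isAffineSymm_scale hB hq hqp hsc with h | h | h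
  · exact Or.inl h
  · exact Or.inr (Or.inl ⟨p, h⟩)
  · exact Or.inr (Or.inr ⟨p, h⟩)

end Classification

section Forward

variable {Y : Set ℝ} {r : ℕ → ℝ} {F : Set (ℕ → ℝ)}

theorem MaxSelfStableY.exists_scaledSeq_of_univ (hr : ∀ n, 0 < r n)
    (hF : MaxSelfStableY univ r F) :
    ∃ s : ℕ → ℝ, (∀ n, |s n| = (r n)⁻¹) ∧ F = scaledSeq univ s ∧ scaledLimits univ s = univ := by
  obtain ⟨x₀, hx₀F, q, hq, hx₀⟩ := hF.exists_tendsto_ne_zero hr (z := r) (fun _ => trivial)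
    one_ne_zero (tendsto_const_nhds.congr fun n => by rw [abs_of_pos (hr n), div_self (hr n).ne'])
  set s : ℕ → ℝ := fun n => if 0 ≤ x₀ n then (r n)⁻¹ else -(r n)⁻¹
  have hsr : ∀ n, |s n| = (r n)⁻¹ := fun n => by
    simp only [s]
    split_ifs <;> simp [abs_of_pos (hr n)]
  have hsx : ∀ n, s n * x₀ n = |x₀ n| / r n := fun n => by
    simp only [s]
    split_ifs with h
    · rw [abs_of_nonneg h, inv_mul_eq_div]
    · rw [abs_of_neg (not_le.mp h), neg_mul, inv_mul_eq_div, neg_div]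
  refine ⟨s, hsr, hF.eq_scaledSeq hsr hx₀F hq (by simpa only [hsx] using hx₀),
    scaledLimits_univ fun n => abs_ne_zero.mp ?_⟩
  rw [hsr]
  exact (inv_pos.mpr (hr n)).ne'

theorem MaxSelfStableY.exists_scaledSeq_of_eq_image_Ici {σ c : ℝ} (hσ : |σ| = 1)
    (hY : Y = (fun x => σ * x + c) '' Ici 0) (hr : ∀ n, 0 < r n) (hr' : Tendsto r atTop atTop)
    (hF : MaxSelfStableY Y r F) :
    ∃ s : ℕ → ℝ, (∀ n, |s n| = (r n)⁻¹) ∧ F = scaledSeq Y s ∧ scaledLimits Y s = Ici 0 := by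
  have hσσ : σ * σ = 1 := by rw [← abs_mul_abs_self, hσ, one_mul]
  have hbdd : ∀ y ∈ Y, σ * c ≤ σ * y := by
    rw [hY]
    rintro _ ⟨t, ht, rfl⟩
    rw [mul_add, ← mul_assoc, hσσ, one_mul]
    linarith [mem_Ici.mp ht]
  have hsr : ∀ n, |σ / r n| = (r n)⁻¹ := fun n => by
    rw [abs_div, hσ, abs_of_pos (hr n), one_div]
  have hsub : F ⊆ scaledSeq Y fun n => σ / r n := fun x hx => by
    obtain ⟨hxY, l, hl⟩ := hF.1.1 hx
    refine ⟨hxY, l, ?_⟩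
    simpa only [div_mul_eq_mul_div] using tendsto_div_of_bddBelow hr hr'
      (fun n => hbdd _ (hxY n)) (by simpa only [abs_mul, hσ, one_mul] using hl)
  refine ⟨_, hsr, hF.2 _ (selfStable_scaledSeq hsr) hsub, Set.ext fun t => ⟨?_, fun ht => ?_⟩⟩
  · rintro ⟨x, hxY, hx⟩
    refine le_of_tendsto_of_tendsto' ((tendsto_const_nhds (x := σ * c)).div_atTop hr') hx
      fun n => ?_
    rw [div_mul_eq_mul_div]
    exact div_le_div_of_nonneg_right (hbdd _ (hxY n)) (hr n).le
  · refine ⟨fun n => σ * (t * r n) + c, fun n => hY ▸ ⟨t * r n, ?_, rfl⟩, ?_⟩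
    · exact mul_nonneg (mem_Ici.mp ht) (hr n).le
    · have heq : ∀ n, σ / r n * (σ * (t * r n) + c) = t + σ * c / r n := fun n => by
        have := (hr n).ne'
        field_simp
        linear_combination t * r n * hσσ
      simpa only [heq, add_zero] using tendsto_const_nhds.add
        ((tendsto_const_nhds (x := σ * c)).div_atTop hr')

theorem exists_scaledSeq_of_isometric
    (hiso : Nonempty (Y ≃ᵢ ℝ) ∨ Nonempty (Y ≃ᵢ Ici (0 : ℝ))) (hr : ∀ n, 0 < r n)
    (hr' : Tendsto r atTop atTop) (hF : MaxSelfStableY Y r F) :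
    ∃ s : ℕ → ℝ, (∀ n, |s n| = (r n)⁻¹) ∧ F = scaledSeq Y s ∧
      Nonempty (scaledLimits Y s ≃ᵢ Y) := by
  rcases hiso with ⟨⟨e⟩⟩ | ⟨⟨e⟩⟩
  · obtain ⟨e₀⟩ := nonempty_univ_isometryEquiv
    obtain ⟨σ, c, hσ, rfl⟩ :=
      (e₀.trans e.symm).exists_eq_image_mul_add (mem_univ 0) (mem_univ 1) zero_ne_one
    have hσ0 : σ ≠ 0 := by rintro rfl; simp at hσ
    rw [image_univ_of_surjective fun y => ⟨(y - c) / σ, by field_simp; ring⟩] at hF ⊢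
    obtain ⟨s, hsr, hFs, hlim⟩ := hF.exists_scaledSeq_of_univ hr
    exact ⟨s, hsr, hFs, by rw [hlim]; exact ⟨.refl _⟩⟩
  · obtain ⟨σ, c, hσ, hY⟩ :=
      e.symm.exists_eq_image_mul_add (mem_Ici.mpr le_rfl) (mem_Ici.mpr zero_le_one) zero_ne_one
    obtain ⟨s, hsr, hFs, hlim⟩ := hF.exists_scaledSeq_of_eq_image_Ici hσ hY hr hr'
    exact ⟨s, hsr, hFs, by rw [hlim]; exact ⟨e.symm⟩⟩

end Forward

section Backward

variable {Y : Set ℝ}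

theorem nonempty_scaledLimits_isometryEquiv_of_pretangentIsometric
    (hR : ∀ r : ℕ → ℝ, (∀ n, 0 < r n) → Tendsto r atTop atTop →
      ∀ F, MaxSelfStableY Y r F → PretangentIsometric Y r F)
    {s : ℕ → ℝ} (hs0 : ∀ n, s n ≠ 0) (hs : Tendsto s atTop (𝓝 0)) {t : ℝ}
    (ht : t ∈ scaledLimits Y s) (ht0 : t ≠ 0) : Nonempty (scaledLimits Y s ≃ᵢ Y) := by
  have hsr : ∀ n, |s n| = (|s n|⁻¹)⁻¹ := fun n => (inv_inv _).symm
  have hr' : Tendsto (fun n => |s n|⁻¹) atTop atTop := Tendsto.inv_tendsto_nhdsGT_zero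
    (tendsto_nhdsWithin_iff.mpr ⟨by simpa using hs.abs, .of_forall fun n => abs_pos.mpr (hs0 n)⟩)
  obtain ⟨x₀, hx₀, hlim⟩ := ht
  exact (pretangentIsometric_scaledSeq_iff hsr).mp
    (hR _ (fun n => inv_pos.mpr (abs_pos.mpr (hs0 n))) hr' _
      (maxSelfStable_scaledSeq hsr hx₀ ht0 hlim))

theorem isometric_of_forall_pretangentIsometric (hY : ∀ C : ℝ, ∃ y ∈ Y, C < |y|)
    (hR : ∀ r : ℕ → ℝ, (∀ n, 0 < r n) → Tendsto r atTop atTop →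
      ∀ F, MaxSelfStableY Y r F → PretangentIsometric Y r F) :
    Nonempty (Y ≃ᵢ ℝ) ∨ Nonempty (Y ≃ᵢ Ici (0 : ℝ)) := by
  choose y hyY hy using fun n : ℕ => hY n
  have hy0 : ∀ n, y n ≠ 0 := fun n => abs_pos.mp ((Nat.cast_nonneg n).trans_lt (hy n))
  have hs : Tendsto (fun n => (y n)⁻¹) atTop (𝓝 0) := by
    have hyt : Tendsto (fun n => |y n|) atTop atTop :=
      tendsto_atTop_mono (fun n => (hy n).le) tendsto_natCast_atTop_atTop
    rw [tendsto_zero_iff_abs_tendsto_zero]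
    simpa [comp_def, abs_inv, Pi.inv_def] using hyt.inv_tendsto_atTop
  set B := scaledLimits Y fun n => (y n)⁻¹
  have h0 : (0 : ℝ) ∈ B := zero_mem_scaledLimits hs (hyY 0)
  have h1 : (1 : ℝ) ∈ B :=
    ⟨y, hyY, tendsto_const_nhds.congr fun n => (inv_mul_cancel₀ (hy0 n)).symm⟩
  have hdil : ∀ μ > 0, Nonempty ((μ * ·) '' B ≃ᵢ Y) := fun μ hμ => by
    rw [← scaledLimits_const_mul hμ.ne']
    refine nonempty_scaledLimits_isometryEquiv_of_pretangentIsometric hR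
      (fun n => mul_ne_zero hμ.ne' (inv_ne_zero (hy0 n)))
      (by simpa using hs.const_mul μ) ?_ (mul_ne_zero hμ.ne' one_ne_zero)
    rw [scaledLimits_const_mul hμ.ne']
    exact mem_image_of_mem _ h1
  obtain ⟨eB⟩ : Nonempty (B ≃ᵢ Y) := by
    have h := hdil 1 one_pos
    rwa [show ((1 : ℝ) * ·) '' B = B by simp] at h
  have hscale := exists_isAffineSymm_of_isometryEquiv_dilate h0 h1 zero_ne_one
    fun μ hμ => ⟨(hdil μ hμ).some.trans eB.symm⟩
  rcases eq_univ_or_Ici_or_Iic_of_isAffineSymm (B := B) isClosed_scaledLimits h0 h1 zero_ne_one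
      hscale
    with hB | ⟨p, hB⟩ | ⟨p, hB⟩ <;> rw [hB] at eB
  · exact Or.inl ⟨eB.symm.trans nonempty_univ_isometryEquiv.some⟩
  · exact Or.inr ⟨eB.symm.trans (nonempty_Ici_isometryEquiv p).some⟩
  · exact Or.inr ⟨eB.symm.trans (nonempty_Iic_isometryEquiv p).some⟩

end Backward

/-- An unbounded subset `Y` of the real line is isometric to `ℝ` or to `ℝ₊ = [0,∞)`
if and only if every pretangent space at infinity of `Y` is isometric to `Y`, i.e.
for every scaling sequence `r` and every maximal self-stable `F ⊆ Seq(Y, r̃)` there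
is a surjection `Φ : F → Y` with `|Φ x̃ - Φ ỹ| = d_r̃(x̃, ỹ)` for all `x̃, ỹ ∈ F`. -/
theorem isometric_to_line_or_halfline_iff_pretangent_isometric (Y : Set ℝ)
    (hY : ∀ C : ℝ, ∃ y ∈ Y, C < |y|) :
    (Nonempty (↥Y ≃ᵢ ℝ) ∨ Nonempty (↥Y ≃ᵢ ↥(Set.Ici (0 : ℝ)))) ↔
    (∀ r : ℕ → ℝ, (∀ n, 0 < r n) → Tendsto r atTop atTop →
      ∀ F : Set (ℕ → ℝ), MaxSelfStableY Y r F →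
        ∃ Φ : F → ↥Y, Function.Surjective Φ ∧
          ∀ x y : F, Tendsto (fun n => |(x : ℕ → ℝ) n - (y : ℕ → ℝ) n| / r n) atTop
            (𝓝 (dist (Φ x) (Φ y)))) := by
  refine ⟨fun hiso r hr hr' F hF => ?_, isometric_of_forall_pretangentIsometric hY⟩
  obtain ⟨s, hsr, rfl, he⟩ := exists_scaledSeq_of_isometric hiso hr hr' hF
  exact (pretangentIsometric_scaledSeq_iff hsr).mpr he
end

section
/- Let Y and Z be unbounded subspaces of a metric space (X,d) and let p ∈ X. Then Y and Z are strongly asymptotically equivalent (asymptotically equivalent with respect to every scaling sequence) if and only if lim_{t→∞} ε(t)/t = 0, where ε(t) = max{ε(t,Z,Y), ε(t,Y,Z)}. -/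
open Filter Topology

/-- `Seq(A, r̃)` for a subspace `A` of `X`: sequences of points of `A` for which the
finite limit `lim dist (x n) p / r n` exists. -/
def SeqIn {X : Type*} [MetricSpace X] (A : Set X) (p : X) (r : ℕ → ℝ) : Set (ℕ → X) :=
  {x | (∀ n, x n ∈ A) ∧ ∃ l : ℝ, Tendsto (fun n => dist (x n) p / r n) atTop (𝓝 l)}

/-- The pseudometric `d^r̃(x̃, ỹ) = limsup_{n → ∞} dist (x n) (y n) / r n`. -/
noncomputable def dSup {X : Type*} [MetricSpace X] (r : ℕ → ℝ) (x y : ℕ → X) : ℝ :=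
  Filter.limsup (fun n => dist (x n) (y n) / r n) Filter.atTop

/-- `Y` and `Z` are asymptotically equivalent with respect to `r̃`: there are maps
`Φ : Seq(Y, r̃) → Seq(Z, r̃)` and `Ψ : Seq(Z, r̃) → Seq(Y, r̃)` with
`d^r̃(ỹ, Φ ỹ) = 0` and `d^r̃(z̃, Ψ z̃) = 0`. -/
def AsympEquiv {X : Type*} [MetricSpace X] (p : X) (r : ℕ → ℝ) (Y Z : Set X) : Prop :=
  (∃ Φ : (ℕ → X) → (ℕ → X), (∀ y ∈ SeqIn Y p r, Φ y ∈ SeqIn Z p r) ∧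
      ∀ y ∈ SeqIn Y p r, dSup r y (Φ y) = 0) ∧
  (∃ Ψ : (ℕ → X) → (ℕ → X), (∀ z ∈ SeqIn Z p r, Ψ z ∈ SeqIn Y p r) ∧
      ∀ z ∈ SeqIn Z p r, dSup r z (Ψ z) = 0)

/-- `ε(t, Z, Y) = sup_{z ∈ S_t^Z} inf_{y ∈ Y} d(z, y)` (equal to `0` when
`S_t^Z = ∅`, by the convention of the real-valued `iSup`), and
`ε(t) = max (ε(t,Z,Y)) (ε(t,Y,Z))`. -/
noncomputable def epsT {X : Type*} [MetricSpace X] (p : X) (Y Z : Set X) (t : ℝ) : ℝ :=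
  max (⨆ z : {z : X // z ∈ Z ∧ dist z p = t}, ⨅ y : Y, dist (z : X) (y : X))
    (⨆ y : {y : X // y ∈ Y ∧ dist y p = t}, ⨅ z : Z, dist (y : X) (z : X))

/-!
Write `ε_{A,B}(t) = sup_{a ∈ S_t^A} dist(a, B)`, so that `ε(t) = max ε_{Z,Y}(t) ε_{Y,Z}(t)`;
then `ε(t)/t → 0` iff both one-sided ratios tend to `0`, and each side is treated on its own.

If `ε_{A,B}(t) = o(t)`, send every point `a ∈ A` to a point of `B` within
`ε_{A,B}(d(a,p)) + 1` of it. As `ε_{A,B}(t) ≤ t + C`, sublinearity upgrades to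
`ε_{A,B}(t) ≤ ηt + K_η` for all `t ≥ 0`, and after division by `r_n` this vanishes along every
sequence of `Seq(A, r̃)`.

Conversely, if `ε_{A,B}(t_n) ≥ δ t_n` along `t_n → ∞`, pick `a_n ∈ S_{t_n}^A` at distance
`> δ t_n / 2` from `B`. For the scaling sequence `r_n = t_n`, `(a_n) ∈ Seq(A, r̃)`, yet it stays at
`d^r̃`-distance `≥ δ/2` from every sequence of `Seq(B, r̃)`.
-/

open Metric

noncomputable def epsSide {X : Type*} [MetricSpace X] (p : X) (A B : Set X) (t : ℝ) : ℝ :=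
  ⨆ a : {a : X // a ∈ A ∧ dist a p = t}, infDist (a : X) B

def AsympApprox {X : Type*} [MetricSpace X] (p : X) (r : ℕ → ℝ) (A B : Set X) : Prop :=
  ∃ Φ : (ℕ → X) → (ℕ → X), (∀ a ∈ SeqIn A p r, Φ a ∈ SeqIn B p r) ∧
    ∀ a ∈ SeqIn A p r, dSup r a (Φ a) = 0

lemma exists_le_mul_add_of_tendsto_div {f : ℝ → ℝ} {C : ℝ} (hC : ∀ t, 0 ≤ t → f t ≤ t + C)
    (hf : Tendsto (fun t => f t / t) atTop (𝓝 0)) {η : ℝ} (hη : 0 < η) :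
    ∃ K, ∀ t, 0 ≤ t → f t ≤ η * t + K := by
  obtain ⟨T, hT⟩ := eventually_atTop.1 ((hf.eventually_lt_const hη).and (eventually_gt_atTop 0))
  refine ⟨max (T + C) 0, fun t ht => ?_⟩
  rcases le_or_gt T t with hTt | htT
  · obtain ⟨hlt, hpos⟩ := hT t hTt
    rw [div_lt_iff₀ hpos] at hlt
    linarith [le_max_right (T + C) 0]
  · linarith [hC t ht, le_max_left (T + C) 0, mul_nonneg hη.le ht]

lemma tendsto_comp_div_of_le_mul_add {f : ℝ → ℝ} (hf0 : ∀ t, 0 ≤ f t)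
    (hf : ∀ η > 0, ∃ K, ∀ t, 0 ≤ t → f t ≤ η * t + K) {t r : ℕ → ℝ} (ht : ∀ n, 0 ≤ t n)
    (hr : Tendsto r atTop atTop) {l : ℝ} (hl : Tendsto (fun n => t n / r n) atTop (𝓝 l)) :
    Tendsto (fun n => f (t n) / r n) atTop (𝓝 0) := by
  refine tendsto_order.2 ⟨fun a ha => ?_, fun ε hε => ?_⟩
  · filter_upwards [hr.eventually_gt_atTop 0] with n hn
    exact ha.trans_le (div_nonneg (hf0 _) hn.le)
  set η := ε / (|l| + 1)
  have hη : 0 < η := by positivity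
  have hηl : η * l + 0 < ε :=
    calc η * l + 0 ≤ η * |l| := by simpa using mul_le_mul_of_nonneg_left (le_abs_self l) hη.le
      _ < η * (|l| + 1) := by gcongr; linarith
      _ = ε := div_mul_cancel₀ ε (by positivity)
  obtain ⟨K, hK⟩ := hf η hη
  have hlim : Tendsto (fun n => η * (t n / r n) + K * (r n)⁻¹) atTop (𝓝 (η * l + 0)) := by
    simpa using (hl.const_mul η).add ((tendsto_inv_atTop_zero.comp hr).const_mul K)
  filter_upwards [hlim.eventually_lt_const hηl, hr.eventually_gt_atTop 0] with n hlt hn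
  calc f (t n) / r n ≤ (η * t n + K) / r n := div_le_div_of_nonneg_right (hK _ (ht n)) hn.le
    _ = η * (t n / r n) + K * (r n)⁻¹ := by ring
    _ < ε := hlt

lemma tendsto_max_div_atTop_iff {f g : ℝ → ℝ} (hf : ∀ t, 0 ≤ f t) (hg : ∀ t, 0 ≤ g t) :
    Tendsto (fun t => max (f t) (g t) / t) atTop (𝓝 0) ↔
      Tendsto (fun t => f t / t) atTop (𝓝 0) ∧ Tendsto (fun t => g t / t) atTop (𝓝 0) := by
  have hmax : (fun t => max (f t) (g t) / t) =ᶠ[atTop] fun t => max (f t / t) (g t / t) := by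
    filter_upwards [eventually_ge_atTop 0] with t ht
    exact (max_div_div_right ht _ _).symm
  rw [tendsto_congr' hmax]
  refine ⟨fun h => ⟨?_, ?_⟩, fun h => by simpa using h.1.max h.2⟩
  · refine squeeze_zero' ?_ (Eventually.of_forall fun t => le_max_left _ _) h
    filter_upwards [eventually_ge_atTop 0] with t ht using div_nonneg (hf t) ht
  · refine squeeze_zero' ?_ (Eventually.of_forall fun t => le_max_right _ _) h
    filter_upwards [eventually_ge_atTop 0] with t ht using div_nonneg (hg t) ht

section
variable {X : Type*} [MetricSpace X] {p : X} {A B : Set X} {r : ℕ → ℝ}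

lemma epsT_eq_max_epsSide (p : X) (Y Z : Set X) (t : ℝ) :
    epsT p Y Z t = max (epsSide p Z Y t) (epsSide p Y Z t) := by
  simp only [epsT, epsSide, infDist_eq_iInf]

lemma asympEquiv_iff {Y Z : Set X} :
    AsympEquiv p r Y Z ↔ AsympApprox p r Y Z ∧ AsympApprox p r Z Y :=
  Iff.rfl

lemma epsSide_nonneg (p : X) (A B : Set X) (t : ℝ) : 0 ≤ epsSide p A B t :=
  Real.iSup_nonneg fun _ => infDist_nonneg

lemma infDist_le_add_dist {b x : X} {t : ℝ} (hb : b ∈ B) (hx : dist x p = t) :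
    infDist x B ≤ t + dist b p := by
  rw [← hx]
  exact (infDist_le_dist_of_mem hb).trans (dist_triangle_right _ _ _)

lemma epsSide_le_add_dist {b : X} (hb : b ∈ B) {t : ℝ} (ht : 0 ≤ t) :
    epsSide p A B t ≤ t + dist b p :=
  Real.iSup_le (fun a => infDist_le_add_dist hb a.2.2) (by positivity)

lemma infDist_le_epsSide {x : X} (hx : x ∈ A) (hB : B.Nonempty) :
    infDist x B ≤ epsSide p A B (dist x p) := by
  obtain ⟨b, hb⟩ := hB
  refine le_ciSup (f := fun a : {a : X // a ∈ A ∧ dist a p = dist x p} => infDist (a : X) B)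
    ⟨dist x p + dist b p, ?_⟩ ⟨x, hx, rfl⟩
  rintro _ ⟨a, rfl⟩
  exact infDist_le_add_dist hb a.2.2

lemma exists_lt_infDist_of_lt_epsSide {c t : ℝ} (hc : 0 ≤ c) (h : c < epsSide p A B t) :
    ∃ a ∈ A, dist a p = t ∧ c < infDist a B := by
  have : Nonempty {a : X // a ∈ A ∧ dist a p = t} := by
    by_contra hempty
    rw [not_nonempty_iff] at hempty
    rw [epsSide, Real.iSup_of_isEmpty] at h
    linarith
  obtain ⟨⟨a, haA, hat⟩, ha⟩ := exists_lt_of_lt_ciSup h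
  exact ⟨a, haA, hat, ha⟩

lemma isBoundedUnder_dist_div_of_mem_seqIn {x y : ℕ → X} (hx : x ∈ SeqIn A p r)
    (hy : y ∈ SeqIn B p r) (hr : ∀ n, 0 ≤ r n) :
    IsBoundedUnder (· ≤ ·) atTop fun n => dist (x n) (y n) / r n := by
  obtain ⟨-, l, hl⟩ := hx
  obtain ⟨-, m, hm⟩ := hy
  refine (hl.add hm).isBoundedUnder_le.mono_le (Eventually.of_forall fun n => ?_)
  dsimp only
  rw [← add_div]
  exact div_le_div_of_nonneg_right (dist_triangle_right _ _ _) (hr n)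

lemma mem_seqIn_of_tendsto_dist_div {x y : ℕ → X} (hx : x ∈ SeqIn A p r) (hy : ∀ n, y n ∈ B)
    (hxy : Tendsto (fun n => dist (x n) (y n) / r n) atTop (𝓝 0)) : y ∈ SeqIn B p r := by
  obtain ⟨-, l, hl⟩ := hx
  refine ⟨hy, l, ?_⟩
  have herr : Tendsto (fun n => (dist (y n) p - dist (x n) p) / r n) atTop (𝓝 0) := by
    refine squeeze_zero_norm (fun n => ?_) (by simpa using hxy.norm)
    rw [norm_div, Real.norm_eq_abs, Real.norm_eq_abs]
    exact div_le_div_of_nonneg_right ((abs_dist_sub_le _ _ _).trans_eq (dist_comm _ _))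
      (abs_nonneg _)
  have hsum := hl.add herr
  rw [add_zero] at hsum
  exact hsum.congr fun n => by ring

theorem asympApprox_of_tendsto_epsSide_div (hB : B.Nonempty)
    (hε : Tendsto (fun t => epsSide p A B t / t) atTop (𝓝 0)) (hr : Tendsto r atTop atTop) :
    AsympApprox p r A B := by
  obtain ⟨b₀, hb₀⟩ := hB
  have hK : ∀ η > 0, ∃ K, ∀ t, 0 ≤ t → epsSide p A B t ≤ η * t + K := fun η hη =>
    exists_le_mul_add_of_tendsto_div (fun t ht => epsSide_le_add_dist hb₀ ht) hε hη
  have happrox : ∀ x ∈ A, ∃ b ∈ B, dist x b < epsSide p A B (dist x p) + 1 := fun x hx =>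
    (infDist_lt_iff ⟨b₀, hb₀⟩).1 ((infDist_le_epsSide hx ⟨b₀, hb₀⟩).trans_lt (lt_add_one _))
  have : Nonempty X := ⟨b₀⟩
  choose! g hgB hg using happrox
  have hclose : ∀ a ∈ SeqIn A p r,
      Tendsto (fun n => dist (a n) (g (a n)) / r n) atTop (𝓝 0) := by
    rintro a ⟨haA, l, hl⟩
    have hbound : Tendsto (fun n => epsSide p A B (dist (a n) p) / r n + (r n)⁻¹) atTop (𝓝 0) := by
      simpa using (tendsto_comp_div_of_le_mul_add (epsSide_nonneg p A B) hK
        (fun n => dist_nonneg) hr hl).add (tendsto_inv_atTop_zero.comp hr)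
    refine squeeze_zero' ?_ ?_ hbound
    · filter_upwards [hr.eventually_gt_atTop 0] with n hn using div_nonneg dist_nonneg hn.le
    · filter_upwards [hr.eventually_gt_atTop 0] with n hn
      calc dist (a n) (g (a n)) / r n ≤ (epsSide p A B (dist (a n) p) + 1) / r n :=
            div_le_div_of_nonneg_right (hg _ (haA n)).le hn.le
        _ = epsSide p A B (dist (a n) p) / r n + (r n)⁻¹ := by rw [add_div, one_div]
  exact ⟨fun a => g ∘ a,
    fun a ha => mem_seqIn_of_tendsto_dist_div ha (fun n => hgB _ (ha.1 n)) (hclose a ha),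
    fun a ha => (hclose a ha).limsup_eq⟩

theorem exists_not_asympApprox_of_frequently_le_epsSide {δ : ℝ} (hδ : 0 < δ)
    (h : ∃ᶠ t in atTop, δ * t ≤ epsSide p A B t) :
    ∃ r : ℕ → ℝ, (∀ n, 0 < r n) ∧ Tendsto r atTop atTop ∧ ¬ AsympApprox p r A B := by
  have hfar : ∀ n : ℕ, ∃ a ∈ A, (n : ℝ) < dist a p ∧ δ / 2 * dist a p < infDist a B := by
    intro n
    obtain ⟨t, hnt, ht⟩ := frequently_atTop.1 h ((n : ℝ) + 1)
    have htpos : 0 < t := (Nat.cast_add_one_pos n).trans_le hnt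
    obtain ⟨a, haA, rfl, ha⟩ :=
      exists_lt_infDist_of_lt_epsSide (by positivity) (by nlinarith : δ / 2 * t < epsSide p A B t)
    exact ⟨a, haA, by linarith, ha⟩
  choose a haA hna ha using hfar
  have hrpos : ∀ n, 0 < dist (a n) p := fun n => lt_of_le_of_lt (Nat.cast_nonneg n) (hna n)
  refine ⟨fun n => dist (a n) p, hrpos,
    tendsto_atTop_mono (fun n => (hna n).le) tendsto_natCast_atTop_atTop, ?_⟩
  rintro ⟨Ψ, hΨ, hΨ0⟩
  have haSeq : a ∈ SeqIn A p fun n => dist (a n) p :=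
    ⟨haA, 1, tendsto_const_nhds.congr fun n => (div_self (hrpos n).ne').symm⟩
  have hgap : ∀ n, δ / 2 ≤ dist (a n) (Ψ a n) / dist (a n) p := fun n => by
    rw [le_div_iff₀ (hrpos n)]
    exact (ha n).le.trans (infDist_le_dist_of_mem ((hΨ a haSeq).1 n))
  have hlimsup := le_limsup_of_frequently_le (Eventually.of_forall hgap).frequently
    (isBoundedUnder_dist_div_of_mem_seqIn haSeq (hΨ a haSeq) fun n => (hrpos n).le)
  have hzero : dSup _ a (Ψ a) = 0 := hΨ0 a haSeq
  rw [dSup] at hzero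
  linarith

theorem forall_asympApprox_iff_tendsto_epsSide_div (hB : B.Nonempty) :
    (∀ r : ℕ → ℝ, (∀ n, 0 < r n) → Tendsto r atTop atTop → AsympApprox p r A B) ↔
      Tendsto (fun t => epsSide p A B t / t) atTop (𝓝 0) := by
  refine ⟨fun h => ?_, fun h r _ hr => asympApprox_of_tendsto_epsSide_div hB h hr⟩
  have hsmall : ∀ δ > 0, ∀ᶠ t in atTop, epsSide p A B t < δ * t := by
    intro δ hδ
    by_contra hfreq
    obtain ⟨r, hr, hrtop, hnot⟩ := exists_not_asympApprox_of_frequently_le_epsSide hδ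
      ((not_eventually.1 hfreq).mono fun t => le_of_not_gt)
    exact hnot (h r hr hrtop)
  refine tendsto_order.2 ⟨fun c hc => ?_, fun δ hδ => ?_⟩
  · filter_upwards [eventually_gt_atTop 0] with t ht
    exact hc.trans_le (div_nonneg (epsSide_nonneg p A B t) ht.le)
  · filter_upwards [hsmall δ hδ, eventually_gt_atTop 0] with t hlt ht
    rwa [div_lt_iff₀ ht]

end

theorem strongAsympEquiv_iff_eps_small {X : Type*} [MetricSpace X] (p : X)
    (Y Z : Set X)
    (hY : ∀ C : ℝ, ∃ y ∈ Y, C < dist y p) (hZ : ∀ C : ℝ, ∃ z ∈ Z, C < dist z p) :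
    (∀ r : ℕ → ℝ, (∀ n, 0 < r n) → Tendsto r atTop atTop → AsympEquiv p r Y Z) ↔
      Tendsto (fun t => epsT p Y Z t / t) atTop (𝓝 0) := by
  obtain ⟨y₀, hy₀, -⟩ := hY 0
  obtain ⟨z₀, hz₀, -⟩ := hZ 0
  simp only [epsT_eq_max_epsSide, asympEquiv_iff]
  rw [tendsto_max_div_atTop_iff (epsSide_nonneg p Z Y) (epsSide_nonneg p Y Z),
    ← forall_asympApprox_iff_tendsto_epsSide_div ⟨y₀, hy₀⟩,
    ← forall_asympApprox_iff_tendsto_epsSide_div ⟨z₀, hz₀⟩]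
  exact ⟨fun h => ⟨fun r hr hr' => (h r hr hr').2, fun r hr hr' => (h r hr hr').1⟩,
    fun h r hr hr' => ⟨h.2 r hr hr', h.1 r hr hr'⟩⟩
end
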